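/- arXiv:2110.07275 — 11 statements merged into one kernel-verified Lean document; each statement's English description precedes it below -/
import Mathlib

section
/- Let m, n ≥ 1 and let a ∈ ℝ^m, b ∈ ℝ^n be probability vectors. Let (i_1,j_1),…,(i_k,j_k) be index pairs with pairwise distinct rows and pairwise distinct columns, set c_ℓ := min(a_{i_ℓ}, b_{j_ℓ}) for ℓ ∈ [k] and α := 1 − ∑_{ℓ=1}^k c_ℓ. Assume α > 0, c_1 ≤ c_2 ≤ ⋯ ≤ c_k, and a_p b_q / α ≤ c_1 for all (p,q) ∈ V. Define Π ∈ ℝ^{m×n} by Π_{i_ℓ j_ℓ} := c_ℓ for ℓ ∈ [k], and for (p,q) ∈ V, Π_{pq} := (a_p − [p = i_ℓ for some ℓ]·c_ℓ)·(b_q − [q = j_{ℓ'} for some ℓ']·c_{ℓ'}) / α (where the indicator subtracts c_ℓ exactly when the row index p equals some constrained row i_ℓ, and c_{ℓ'} exactly when the column index q equals some constrained column j_{ℓ'}). Then Π ∈ U(a,b) ∩ O, i.e., the order-constrained optimal transport problem is feasible. -/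
/-!
Write `A p = a p - ∑_{I ℓ = p} c ℓ` and `B q = b q - ∑_{J ℓ = q} c ℓ` for the marginals left after
placing the mass `c ℓ` at `(I ℓ, J ℓ)`. Since `c ℓ = min (a (I ℓ)) (b (J ℓ))`, one of `A (I ℓ)`,
`B (J ℓ)` vanishes, so `Pl` is everywhere the placed mass plus the outer product `A p * B q / α`.
Both `A` and `B` are nonnegative with total mass `α`, which gives nonnegativity and the marginals;
the order constraints on `V` follow from `A ≤ a`, `B ≤ b` and the hypothesis `a p * b q / α ≤ c 0`.
-/

open Finset

namespace OrderConstrainedOT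

variable {ι ρ σ : Type*} [Fintype ι] [DecidableEq ρ] [DecidableEq σ]

section Residual

variable (a : ρ → ℝ) (I : ι → ρ) (c : ι → ℝ)

def residualMarginal (p : ρ) : ℝ :=
  a p - ∑ ℓ, if I ℓ = p then c ℓ else 0

variable {a I c}

theorem residualMarginal_apply_of_injective (hI : Function.Injective I) (ℓ : ι) :
    residualMarginal a I c (I ℓ) = a (I ℓ) - c ℓ := by
  rw [residualMarginal, sum_eq_single ℓ (fun ℓ' _ h => if_neg (hI.ne h)) (by simp), if_pos rfl]

theorem residualMarginal_nonneg (hI : Function.Injective I) (ha : ∀ p, 0 ≤ a p)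
    (hca : ∀ ℓ, c ℓ ≤ a (I ℓ)) (p : ρ) : 0 ≤ residualMarginal a I c p := by
  by_cases hp : ∃ ℓ, I ℓ = p
  · obtain ⟨ℓ, rfl⟩ := hp
    rw [residualMarginal_apply_of_injective hI]
    exact sub_nonneg.mpr (hca ℓ)
  · push Not at hp
    simpa [residualMarginal, hp] using ha p

theorem residualMarginal_le (hc : ∀ ℓ, 0 ≤ c ℓ) (p : ρ) : residualMarginal a I c p ≤ a p :=
  sub_le_self _ (sum_nonneg fun ℓ _ => by split_ifs <;> simp [hc ℓ])

theorem sum_residualMarginal [Fintype ρ] :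
    ∑ p, residualMarginal a I c p = ∑ p, a p - ∑ ℓ, c ℓ := by
  simp only [residualMarginal, sum_sub_distrib, sum_comm (γ := ρ), sum_ite_eq, mem_univ,
    ↓reduceIte]

end Residual

section PlacedMass

variable (I : ι → ρ) (J : ι → σ) (c : ι → ℝ)

def placedMass (p : ρ) (q : σ) : ℝ :=
  ∑ ℓ, if I ℓ = p ∧ J ℓ = q then c ℓ else 0

variable {I J c}

theorem placedMass_apply_of_injective (hI : Function.Injective I) (ℓ : ι) :
    placedMass I J c (I ℓ) (J ℓ) = c ℓ := by
  rw [placedMass, sum_eq_single ℓ (fun ℓ' _ h => if_neg fun h' => hI.ne h h'.1) (by simp),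
    if_pos ⟨rfl, rfl⟩]

theorem placedMass_eq_zero {p : ρ} {q : σ} (hpq : ∀ ℓ, ¬(I ℓ = p ∧ J ℓ = q)) :
    placedMass I J c p q = 0 :=
  sum_eq_zero fun ℓ _ => if_neg (hpq ℓ)

theorem placedMass_nonneg (hc : ∀ ℓ, 0 ≤ c ℓ) (p : ρ) (q : σ) : 0 ≤ placedMass I J c p q :=
  sum_nonneg fun ℓ _ => by split_ifs <;> simp [hc ℓ]

theorem sum_placedMass_row [Fintype σ] (p : ρ) :
    ∑ q, placedMass I J c p q = ∑ ℓ, if I ℓ = p then c ℓ else 0 := by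
  simp only [placedMass, ite_and, sum_comm (γ := σ), sum_ite_irrel, sum_ite_eq, mem_univ,
    ↓reduceIte, sum_const_zero]

theorem sum_placedMass_col [Fintype ρ] (q : σ) :
    ∑ p, placedMass I J c p q = ∑ ℓ, if J ℓ = q then c ℓ else 0 := by
  simp only [placedMass, ite_and, sum_comm (γ := ρ), sum_ite_eq, mem_univ, ↓reduceIte]

end PlacedMass

theorem sub_min_mul_sub_min {R : Type*} [Ring R] [LinearOrder R] (x y : R) :
    (x - min x y) * (y - min x y) = 0 := by
  rcases le_total x y with h | h <;> simp [h]

section Decomposition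

variable {I : ι → ρ} {J : ι → σ} {c : ι → ℝ} {a : ρ → ℝ} {b : σ → ℝ} {α : ℝ}

theorem eq_placedMass_add_residualMarginal_mul {P : ρ → σ → ℝ} (hI : Function.Injective I)
    (hJ : Function.Injective J) (hc : ∀ ℓ, c ℓ = min (a (I ℓ)) (b (J ℓ)))
    (hP₁ : ∀ ℓ, P (I ℓ) (J ℓ) = c ℓ)
    (hP₂ : ∀ p q, (∀ ℓ, ¬(I ℓ = p ∧ J ℓ = q)) →
      P p q = residualMarginal a I c p * residualMarginal b J c q / α) (p : ρ) (q : σ) :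
    P p q = placedMass I J c p q + residualMarginal a I c p * residualMarginal b J c q / α := by
  by_cases hpq : ∃ ℓ, I ℓ = p ∧ J ℓ = q
  · obtain ⟨ℓ, rfl, rfl⟩ := hpq
    rw [hP₁, placedMass_apply_of_injective hI, residualMarginal_apply_of_injective hI,
      residualMarginal_apply_of_injective hJ, hc, sub_min_mul_sub_min, zero_div, add_zero]
  · rw [hP₂ p q fun ℓ h => hpq ⟨ℓ, h⟩, placedMass_eq_zero fun ℓ h => hpq ⟨ℓ, h⟩, zero_add]

theorem sum_placedMass_add_residualMarginal_mul_row [Fintype σ] {B : σ → ℝ} (hα : α ≠ 0)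
    (hB : ∑ q, B q = α) (p : ρ) :
    ∑ q, (placedMass I J c p q + residualMarginal a I c p * B q / α) = a p := by
  rw [sum_add_distrib, sum_placedMass_row, ← sum_div, ← mul_sum, hB,
    mul_div_cancel_right₀ _ hα, residualMarginal, add_sub_cancel]

theorem sum_placedMass_add_mul_residualMarginal_col [Fintype ρ] {A : ρ → ℝ} (hα : α ≠ 0)
    (hA : ∑ p, A p = α) (q : σ) :
    ∑ p, (placedMass I J c p q + A p * residualMarginal b J c q / α) = b q := by
  rw [sum_add_distrib, sum_placedMass_col, ← sum_div, ← sum_mul, hA,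
    mul_div_cancel_left₀ _ hα, residualMarginal, add_sub_cancel]

end Decomposition

end OrderConstrainedOT

open OrderConstrainedOT in
theorem order_constrained_OT_feasibility_general
    (m n k : ℕ) (hk : 0 < k)
    (a : Fin m → ℝ) (b : Fin n → ℝ)
    (ha0 : ∀ i, 0 ≤ a i) (hb0 : ∀ j, 0 ≤ b j)
    (ha1 : ∑ i, a i = 1) (hb1 : ∑ j, b j = 1)
    (I : Fin k → Fin m) (J : Fin k → Fin n)
    (hI : Function.Injective I) (hJ : Function.Injective J)
    (c : Fin k → ℝ) (hc : ∀ ℓ, c ℓ = min (a (I ℓ)) (b (J ℓ)))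
    (α : ℝ) (hα : α = 1 - ∑ ℓ, c ℓ) (hαpos : 0 < α)
    (hmono : Monotone c)
    (hV : ∀ p q, (∀ ℓ, ¬(I ℓ = p ∧ J ℓ = q)) → a p * b q / α ≤ c ⟨0, hk⟩)
    (Pl : Matrix (Fin m) (Fin n) ℝ)
    (hPl1 : ∀ ℓ, Pl (I ℓ) (J ℓ) = c ℓ)
    (hPl2 : ∀ p q, (∀ ℓ, ¬(I ℓ = p ∧ J ℓ = q)) →
      Pl p q = (a p - ∑ ℓ, if I ℓ = p then c ℓ else 0) *
               (b q - ∑ ℓ, if J ℓ = q then c ℓ else 0) / α) :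
    (∀ p q, 0 ≤ Pl p q) ∧
    (∀ p, ∑ q, Pl p q = a p) ∧
    (∀ q, ∑ p, Pl p q = b q) ∧
    (∀ ℓ ℓ' : Fin k, ℓ ≤ ℓ' → Pl (I ℓ) (J ℓ) ≤ Pl (I ℓ') (J ℓ')) ∧
    (∀ p q, (∀ ℓ, ¬(I ℓ = p ∧ J ℓ = q)) → Pl p q ≤ Pl (I ⟨0, hk⟩) (J ⟨0, hk⟩)) := by
  have hc0 (ℓ) : 0 ≤ c ℓ := hc ℓ ▸ le_min (ha0 _) (hb0 _)
  have hA0 : ∀ p, 0 ≤ residualMarginal a I c p :=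
    residualMarginal_nonneg hI ha0 fun ℓ => hc ℓ ▸ min_le_left _ _
  have hB0 : ∀ q, 0 ≤ residualMarginal b J c q :=
    residualMarginal_nonneg hJ hb0 fun ℓ => hc ℓ ▸ min_le_right _ _
  have hAsum : ∑ p, residualMarginal a I c p = α := by rw [sum_residualMarginal, ha1, hα]
  have hBsum : ∑ q, residualMarginal b J c q = α := by rw [sum_residualMarginal, hb1, hα]
  have hPl : ∀ p q, Pl p q =
      placedMass I J c p q + residualMarginal a I c p * residualMarginal b J c q / α :=
    eq_placedMass_add_residualMarginal_mul hI hJ hc hPl1 hPl2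
  refine ⟨fun p q => ?_, fun p => ?_, fun q => ?_, fun ℓ ℓ' h => ?_, fun p q hpq => ?_⟩
  · rw [hPl]
    exact add_nonneg (placedMass_nonneg hc0 p q)
      (div_nonneg (mul_nonneg (hA0 p) (hB0 q)) hαpos.le)
  · simpa only [hPl] using sum_placedMass_add_residualMarginal_mul_row hαpos.ne' hBsum p
  · simpa only [hPl] using sum_placedMass_add_mul_residualMarginal_col hαpos.ne' hAsum q
  · simpa only [hPl1] using hmono h
  · calc Pl p q = residualMarginal a I c p * residualMarginal b J c q / α := hPl2 p q hpq
      _ ≤ a p * b q / α := by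
        gcongr
        exacts [hB0 q, ha0 p, residualMarginal_le hc0 p, residualMarginal_le hc0 q]
      _ ≤ c ⟨0, hk⟩ := hV p q hpq
      _ = Pl (I ⟨0, hk⟩) (J ⟨0, hk⟩) := (hPl1 _).symm

/-- **Feasibility of order-constrained optimal transport (Proposition 1).**
Given probability vectors `a ∈ ℝ^m`, `b ∈ ℝ^n`, index pairs `(I ℓ, J ℓ)` with pairwise
distinct rows and columns, `c ℓ = min (a (I ℓ)) (b (J ℓ))`, `α = 1 - ∑ c ℓ > 0`,
`c` nondecreasing and `a p * b q / α ≤ c 0` on the unconstrained variates `V`,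
the matrix `Pl` defined by `Pl (I ℓ) (J ℓ) = c ℓ` and the product formula on `V`
belongs to `U(a,b) ∩ O`. -/
theorem order_constrained_OT_feasibility
    (m n k : ℕ) (hm : 1 ≤ m) (hn : 1 ≤ n) (hk : 0 < k)
    (a : Fin m → ℝ) (b : Fin n → ℝ)
    (ha0 : ∀ i, 0 ≤ a i) (hb0 : ∀ j, 0 ≤ b j)
    (ha1 : ∑ i, a i = 1) (hb1 : ∑ j, b j = 1)
    (I : Fin k → Fin m) (J : Fin k → Fin n)
    (hI : Function.Injective I) (hJ : Function.Injective J)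
    (c : Fin k → ℝ) (hc : ∀ ℓ, c ℓ = min (a (I ℓ)) (b (J ℓ)))
    (α : ℝ) (hα : α = 1 - ∑ ℓ, c ℓ) (hαpos : 0 < α)
    (hmono : Monotone c)
    (hV : ∀ p q, (∀ ℓ, ¬(I ℓ = p ∧ J ℓ = q)) → a p * b q / α ≤ c ⟨0, hk⟩)
    (Pl : Matrix (Fin m) (Fin n) ℝ)
    (hPl1 : ∀ ℓ, Pl (I ℓ) (J ℓ) = c ℓ)
    (hPl2 : ∀ p q, (∀ ℓ, ¬(I ℓ = p ∧ J ℓ = q)) →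
      Pl p q = (a p - ∑ ℓ, if I ℓ = p then c ℓ else 0) *
               (b q - ∑ ℓ, if J ℓ = q then c ℓ else 0) / α) :
    (∀ p q, 0 ≤ Pl p q) ∧
    (∀ p, ∑ q, Pl p q = a p) ∧
    (∀ q, ∑ p, Pl p q = b q) ∧
    (∀ ℓ ℓ' : Fin k, ℓ ≤ ℓ' → Pl (I ℓ) (J ℓ) ≤ Pl (I ℓ') (J ℓ')) ∧
    (∀ p q, (∀ ℓ, ¬(I ℓ = p ∧ J ℓ = q)) → Pl p q ≤ Pl (I ⟨0, hk⟩) (J ⟨0, hk⟩)) :=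
  order_constrained_OT_feasibility_general m n k hk a b ha0 hb0 ha1 hb1 I J hI hJ c hc α hα hαpos
    hmono hV Pl hPl1 hPl2
end

section
/- Let m, n ≥ 1, let a ∈ ℝ^m and b ∈ ℝ^n satisfy ∑_{i=1}^m a_i = ∑_{j=1}^n b_j, and let C₁(a,b) := {X ∈ ℝ^{m×n} : X 1_n = a, X^T 1_m = b}. Define P_m := (1/m) 1_m 1_m^T, P_n := (1/n) 1_n 1_n^T, M := I_m − (1/(m+n)) 1_m 1_m^T, and N := I_n − (1/(m+n)) 1_n 1_n^T. Given any X ∈ ℝ^{m×n}, define Y₁ ∈ ℝ^{m×n} by (Y₁)_{pq} := (M a)_p / n + (N b)_q / m, define Y₂ := M (X P_n) + (P_m X) N, and set X̂ := Y₁ + (X − Y₂). Then X̂ is the Euclidean projection of X onto C₁(a,b): X̂ ∈ C₁(a,b), and for every Y ∈ C₁(a,b), ‖X̂ − X‖_F ≤ ‖Y − X‖_F, where ‖·‖_F is the Frobenius norm. -/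
/-! The affine set `C₁(a,b)` is a translate of the space of matrices with vanishing row and
column sums, whose orthogonal complement (for the Frobenius inner product) consists of the
matrices `u i + v j`. Hence a point `P` of `C₁(a,b)` with `P - X` of this form is the projection
of `X`, by Pythagoras. The classical such point is
`P i j = X i j + (a i - rᵢ)/n + (b j - cⱼ)/m - (∑ a - ∑ X)/(m n)` with `r`, `c` the row and column
sums of `X`; expanding the entries of `M`, `N`, `P_m`, `P_n` shows that `X̂` is this matrix, the
identity `(1/(m+n)) (1/m + 1/n) = 1/(m n)` accounting for the `1/(m+n)` in `M` and `N`. -/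

open Finset Matrix

namespace Matrix

variable {ι ι' κ κ' R : Type*} [NonAssocSemiring R]

theorem ones_mul_apply [Fintype ι] (B : Matrix ι κ R) (i : ι') (j : κ) :
    ((of fun _ _ => (1 : R) : Matrix ι' ι R) * B) i j = ∑ k, B k j := by
  simp [mul_apply]

theorem mul_ones_apply [Fintype κ] (B : Matrix ι κ R) (i : ι) (j : κ') :
    (B * (of fun _ _ => (1 : R) : Matrix κ κ' R)) i j = ∑ k, B i k := by
  simp [mul_apply]

theorem ones_mulVec_apply [Fintype ι] (a : ι → R) (i : ι') :
    ((of fun _ _ => (1 : R) : Matrix ι' ι R) *ᵥ a) i = ∑ k, a k := by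
  simp [mulVec, dotProduct]

end Matrix

section RowColProjection

variable {ι κ : Type*} [Fintype ι] [Fintype κ]

theorem sum_sum_mul_add_eq_zero {E : Matrix ι κ ℝ} (hrow : ∀ i, ∑ j, E i j = 0)
    (hcol : ∀ j, ∑ i, E i j = 0) (u : ι → ℝ) (v : κ → ℝ) :
    ∑ i, ∑ j, E i j * (u i + v j) = 0 := by
  simp only [mul_add, sum_add_distrib]
  rw [sum_comm (f := fun i j => E i j * v j)]
  simp [← sum_mul, hrow, hcol]

theorem sum_sum_sq_sub_le_of_sub_eq_add {X P Y : Matrix ι κ ℝ} (u : ι → ℝ) (v : κ → ℝ)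
    (hP : ∀ i j, P i j - X i j = u i + v j)
    (hrow : ∀ i, ∑ j, Y i j = ∑ j, P i j) (hcol : ∀ j, ∑ i, Y i j = ∑ i, P i j) :
    ∑ i, ∑ j, (P i j - X i j) ^ 2 ≤ ∑ i, ∑ j, (Y i j - X i j) ^ 2 := by
  have hortho : ∑ i, ∑ j, (Y i j - P i j) * (u i + v j) = 0 :=
    sum_sum_mul_add_eq_zero (E := Y - P) (by simp [sum_sub_distrib, hrow])
      (by simp [sum_sub_distrib, hcol]) u v
  have hsplit : ∑ i, ∑ j, (Y i j - X i j) ^ 2 = ∑ i, ∑ j, (Y i j - P i j) ^ 2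
      + 2 * ∑ i, ∑ j, (Y i j - P i j) * (u i + v j) + ∑ i, ∑ j, (P i j - X i j) ^ 2 := by
    simp only [← hP, mul_sum, ← sum_add_distrib]
    refine sum_congr rfl fun i _ => sum_congr rfl fun j _ => by ring
  have hnonneg : 0 ≤ ∑ i, ∑ j, (Y i j - P i j) ^ 2 := by positivity
  linarith

noncomputable def rowColProj (a : ι → ℝ) (b : κ → ℝ) (X : Matrix ι κ ℝ) : Matrix ι κ ℝ :=
  of fun i j => X i j + (a i - ∑ l, X i l) / Fintype.card κ + (b j - ∑ k, X k j) / Fintype.card ι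
    - (∑ k, a k - ∑ k, ∑ l, X k l) / (Fintype.card ι * Fintype.card κ)

variable (a : ι → ℝ) (b : κ → ℝ) (X : Matrix ι κ ℝ)

theorem rowColProj_sum_row [Nonempty κ] (hab : ∑ i, a i = ∑ j, b j) (i : ι) :
    ∑ j, rowColProj a b X i j = a i := by
  simp only [rowColProj, of_apply, sum_add_distrib, sum_sub_distrib, ← sum_div, sum_const,
    card_univ, nsmul_eq_mul, ← hab]
  rw [sum_comm (f := fun k j => X k j)]
  field_simp
  ring

theorem rowColProj_sum_col [Nonempty ι] (j : κ) : ∑ i, rowColProj a b X i j = b j := by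
  simp only [rowColProj, of_apply, sum_add_distrib, sum_sub_distrib, ← sum_div, sum_const,
    card_univ, nsmul_eq_mul]
  field_simp
  ring

theorem rowColProj_sub_apply (i : ι) (j : κ) :
    rowColProj a b X i j - X i j =
      ((a i - ∑ l, X i l) / Fintype.card κ
        - (∑ k, a k - ∑ k, ∑ l, X k l) / (Fintype.card ι * Fintype.card κ))
      + (b j - ∑ k, X k j) / Fintype.card ι := by
  simp only [rowColProj, of_apply]
  ring

end RowColProjection

/-- **Euclidean projection onto the marginal-constraint affine set (Proposition 2).**
With `M = I_m - (1/(m+n)) 1 1ᵀ`, `N = I_n - (1/(m+n)) 1 1ᵀ`, `P_m = (1/m) 1 1ᵀ`,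
`P_n = (1/n) 1 1ᵀ`, `Y₁` given entrywise by `(M a)_p / n + (N b)_q / m`,
`Y₂ = M (X P_n) + (P_m X) N`, the matrix `X̂ = Y₁ + (X - Y₂)` is the Euclidean
projection of `X` onto `C₁(a,b) = {X : X 1 = a, Xᵀ 1 = b}` (Frobenius norm). -/
theorem projection_rowcolsum
    (m n : ℕ) (hm : 1 ≤ m) (hn : 1 ≤ n)
    (a : Fin m → ℝ) (b : Fin n → ℝ)
    (hab : ∑ i, a i = ∑ j, b j)
    (X : Matrix (Fin m) (Fin n) ℝ)
    (M : Matrix (Fin m) (Fin m) ℝ)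
    (hM : M = 1 - ((m : ℝ) + (n : ℝ))⁻¹ • Matrix.of (fun _ _ => (1 : ℝ)))
    (N : Matrix (Fin n) (Fin n) ℝ)
    (hN : N = 1 - ((m : ℝ) + (n : ℝ))⁻¹ • Matrix.of (fun _ _ => (1 : ℝ)))
    (Pm : Matrix (Fin m) (Fin m) ℝ)
    (hPm : Pm = (m : ℝ)⁻¹ • Matrix.of (fun _ _ => (1 : ℝ)))
    (Pn : Matrix (Fin n) (Fin n) ℝ)
    (hPn : Pn = (n : ℝ)⁻¹ • Matrix.of (fun _ _ => (1 : ℝ)))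
    (Y₁ : Matrix (Fin m) (Fin n) ℝ)
    (hY₁ : ∀ p q, Y₁ p q = (M.mulVec a) p / (n : ℝ) + (N.mulVec b) q / (m : ℝ))
    (Y₂ : Matrix (Fin m) (Fin n) ℝ)
    (hY₂ : Y₂ = M * (X * Pn) + (Pm * X) * N)
    (Xh : Matrix (Fin m) (Fin n) ℝ)
    (hXh : Xh = Y₁ + (X - Y₂)) :
    ((∀ p, ∑ q, Xh p q = a p) ∧ (∀ q, ∑ p, Xh p q = b q)) ∧
    ∀ Y : Matrix (Fin m) (Fin n) ℝ,
      (∀ p, ∑ q, Y p q = a p) → (∀ q, ∑ p, Y p q = b q) →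
      Real.sqrt (∑ p, ∑ q, (Xh p q - X p q) ^ 2) ≤
        Real.sqrt (∑ p, ∑ q, (Y p q - X p q) ^ 2) := by
  have : NeZero m := ⟨by omega⟩
  have : NeZero n := ⟨by omega⟩
  have hXh_eq : Xh = rowColProj a b X := by
    ext p q
    simp only [hXh, hY₂, hY₁, hM, hN, hPm, hPn, rowColProj, Matrix.add_apply, Matrix.sub_apply,
      of_apply, Matrix.sub_mul, Matrix.mul_sub, Matrix.one_mul, Matrix.mul_one, sub_mulVec,
      one_mulVec, smul_mul, Matrix.mul_smul, smul_mulVec, Matrix.smul_apply, Pi.sub_apply,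
      Pi.smul_apply, smul_eq_mul, ones_mul_apply, mul_ones_apply, ones_mulVec_apply,
      Fintype.card_fin, ← hab]
    rw [sum_comm (f := fun k l => X k l)]
    field_simp
    ring
  subst hXh_eq
  refine ⟨⟨rowColProj_sum_row a b X hab, rowColProj_sum_col a b X⟩,
    fun Y hYrow hYcol => Real.sqrt_le_sqrt ?_⟩
  exact sum_sum_sq_sub_le_of_sub_eq_add _ _ (rowColProj_sub_apply a b X)
    (fun p => by rw [hYrow, rowColProj_sum_row a b X hab])
    (fun q => by rw [hYcol, rowColProj_sum_col a b X])
end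

section
/- Let m, n ≥ 1. Define the (m+n) × (mn) real matrix A, with rows indexed by [m] ⊔ [n] and columns indexed by pairs (p,q) ∈ [m]×[n], by A_{i,(p,q)} := 1 if p = i and 0 otherwise (for row indices i ∈ [m]), and A_{j,(p,q)} := 1 if q = j and 0 otherwise (for row indices j ∈ [n]). Define the (mn) × (m+n) matrix P by P_{(p,q),i} := (1/n)(δ_{pi} − 1/(m+n)) for i ∈ [m] and P_{(p,q),j} := (1/m)(δ_{qj} − 1/(m+n)) for j ∈ [n], where δ is the Kronecker delta. Then P is the Moore–Penrose pseudoinverse of A: A P A = A, P A P = P, (A P)^T = A P, and (P A)^T = P A. -/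
/-!
Let `m = |ι|`, `n = |κ|` and `v = (1, …, 1, -1, …, -1) ∈ K^(ι ⊕ κ)`. Every column of the
transport constraint matrix `A` has one `1` among the row constraints and one among the column
constraints, so `vᵀ A = 0`. A direct computation gives `A P = 1 - vvᵀ / (m + n)`, the symmetric
projection onto `v^⊥`, and `P v = 0`. Then `A P A = A - v (vᵀ A) / (m + n) = A`,
`P A P = P - (P v) vᵀ / (m + n) = P`, `A P` is visibly symmetric, and `P A` is symmetric by its
explicit entries.
-/

open Matrix

namespace Matrix

variable {K : Type*} [Field K] {ι κ : Type*} [Fintype ι] [Fintype κ] [DecidableEq ι] [DecidableEq κ]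

variable (K ι κ) in
def transportConstraint : Matrix (ι ⊕ κ) (ι × κ) K
  | .inl i, (p, _) => if p = i then 1 else 0
  | .inr j, (_, q) => if q = j then 1 else 0

variable (K ι κ) in
def transportPseudoinverse : Matrix (ι × κ) (ι ⊕ κ) K
  | (p, _), .inl i =>
    (Fintype.card κ : K)⁻¹ * ((if p = i then 1 else 0) - (Fintype.card ι + Fintype.card κ : K)⁻¹)
  | (_, q), .inr j =>
    (Fintype.card ι : K)⁻¹ * ((if q = j then 1 else 0) - (Fintype.card ι + Fintype.card κ : K)⁻¹)

theorem vecMul_transportConstraint :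
    (1 ⊕ᵥ -1) ᵥ* transportConstraint K ι κ = 0 := by
  ext ⟨p, q⟩
  simp [vecMul, dotProduct, Fintype.sum_sum_type, transportConstraint]

theorem transpose_transportPseudoinverse_mul_transportConstraint :
    (transportPseudoinverse K ι κ * transportConstraint K ι κ)ᵀ =
      transportPseudoinverse K ι κ * transportConstraint K ι κ := by
  ext x y
  simp [mul_apply, Fintype.sum_sum_type, transportConstraint, transportPseudoinverse, eq_comm]

variable [CharZero K] [Nonempty ι] [Nonempty κ]

theorem transportPseudoinverse_mulVec :
    transportPseudoinverse K ι κ *ᵥ (1 ⊕ᵥ -1) = 0 := by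
  ext ⟨p, q⟩
  have : (Fintype.card ι : K) ≠ 0 := by simp
  have : (Fintype.card κ : K) ≠ 0 := by simp
  have : (Fintype.card ι + Fintype.card κ : K) ≠ 0 := by norm_cast; positivity
  simp [mulVec, dotProduct, Fintype.sum_sum_type, transportPseudoinverse, ← Finset.mul_sum]
  field_simp
  ring

theorem transportConstraint_mul_transportPseudoinverse :
    transportConstraint K ι κ * transportPseudoinverse K ι κ =
      1 - (Fintype.card ι + Fintype.card κ : K)⁻¹ •
        vecMulVec (1 ⊕ᵥ -1) (1 ⊕ᵥ -1) := by
  have : (Fintype.card ι : K) ≠ 0 := by simp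
  have : (Fintype.card κ : K) ≠ 0 := by simp
  have : (Fintype.card ι + Fintype.card κ : K) ≠ 0 := by norm_cast; positivity
  ext (i | j) (i' | j') <;>
    simp [mul_apply, Fintype.sum_prod_type, transportConstraint, transportPseudoinverse,
      one_apply, vecMulVec_apply, ← Finset.mul_sum] <;>
    field_simp
  · split_ifs <;> simp [mul_sub]
  · ring
  · ring
  · split_ifs <;> simp [mul_sub]

theorem transpose_transportConstraint_mul_transportPseudoinverse :
    (transportConstraint K ι κ * transportPseudoinverse K ι κ)ᵀ =
      transportConstraint K ι κ * transportPseudoinverse K ι κ := by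
  rw [transportConstraint_mul_transportPseudoinverse]
  simp [transpose_sub, transpose_smul]

theorem transportConstraint_mul_transportPseudoinverse_mul_transportConstraint :
    transportConstraint K ι κ * transportPseudoinverse K ι κ * transportConstraint K ι κ =
      transportConstraint K ι κ := by
  rw [transportConstraint_mul_transportPseudoinverse, Matrix.sub_mul, Matrix.smul_mul,
    vecMulVec_mul, vecMul_transportConstraint]
  ext
  simp [vecMulVec_apply]

theorem transportPseudoinverse_mul_transportConstraint_mul_transportPseudoinverse :
    transportPseudoinverse K ι κ * transportConstraint K ι κ * transportPseudoinverse K ι κ =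
      transportPseudoinverse K ι κ := by
  rw [Matrix.mul_assoc, transportConstraint_mul_transportPseudoinverse, Matrix.mul_sub,
    Matrix.mul_smul, mul_vecMulVec, transportPseudoinverse_mulVec]
  simp

end Matrix

/-- **Moore–Penrose pseudoinverse of the transport constraint matrix.**
With `A` the `(m+n) × (mn)` row/column-sum constraint matrix and `P` defined by
`P (p,q) (inl i) = (1/n)(δ_{pi} - 1/(m+n))`, `P (p,q) (inr j) = (1/m)(δ_{qj} - 1/(m+n))`,
the matrix `P` satisfies the four Moore–Penrose conditions for `A`. -/
theorem pseudoinverse_transport_constraint_matrix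
    (m n : ℕ) (hm : 1 ≤ m) (hn : 1 ≤ n)
    (A : Matrix (Fin m ⊕ Fin n) (Fin m × Fin n) ℝ)
    (hA : ∀ (i : Fin m) (p : Fin m) (q : Fin n),
      A (Sum.inl i) (p, q) = if p = i then 1 else 0)
    (hA' : ∀ (j : Fin n) (p : Fin m) (q : Fin n),
      A (Sum.inr j) (p, q) = if q = j then 1 else 0)
    (P : Matrix (Fin m × Fin n) (Fin m ⊕ Fin n) ℝ)
    (hP : ∀ (i : Fin m) (p : Fin m) (q : Fin n),
      P (p, q) (Sum.inl i) =
        (1 / (n : ℝ)) * ((if p = i then 1 else 0) - 1 / ((m : ℝ) + (n : ℝ))))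
    (hP' : ∀ (j : Fin n) (p : Fin m) (q : Fin n),
      P (p, q) (Sum.inr j) =
        (1 / (m : ℝ)) * ((if q = j then 1 else 0) - 1 / ((m : ℝ) + (n : ℝ)))) :
    A * P * A = A ∧ P * A * P = P ∧ (A * P)ᵀ = A * P ∧ (P * A)ᵀ = P * A := by
  have : Nonempty (Fin m) := Fin.pos_iff_nonempty.1 hm
  have : Nonempty (Fin n) := Fin.pos_iff_nonempty.1 hn
  obtain rfl : A = transportConstraint ℝ (Fin m) (Fin n) := by
    ext (i | j) ⟨p, q⟩ <;> simp [transportConstraint, hA, hA']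
  obtain rfl : P = transportPseudoinverse ℝ (Fin m) (Fin n) := by
    ext ⟨p, q⟩ (i | j) <;> simp [transportPseudoinverse, hP, hP']
  exact ⟨transportConstraint_mul_transportPseudoinverse_mul_transportConstraint,
    transportPseudoinverse_mul_transportConstraint_mul_transportPseudoinverse,
    transpose_transportConstraint_mul_transportPseudoinverse,
    transpose_transportPseudoinverse_mul_transportConstraint⟩
end

section
/- Let m, n ≥ 1, and let A ∈ ℝ^{(m+n)×(mn)} and P ∈ ℝ^{(mn)×(m+n)} be defined by A_{i,(p,q)} := δ_{pi} for i ∈ [m], A_{j,(p,q)} := δ_{qj} for j ∈ [n], P_{(p,q),i} := (1/n)(δ_{pi} − 1/(m+n)), and P_{(p,q),j} := (1/m)(δ_{qj} − 1/(m+n)). Let a ∈ ℝ^m and b ∈ ℝ^n satisfy ∑_{i=1}^m a_i = ∑_{j=1}^n b_j, and write (a;b) ∈ ℝ^{m+n} for their concatenation. Then for any x ∈ ℝ^{mn}, the vector y := P (a;b) + (x − A^T P^T x) satisfies A y = (a;b), and there exists w ∈ ℝ^{m+n} such that y + A^T w = x. -/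
/-!
The constraint matrix `A` factors its pseudoinverse as `P = Aᵀ Q`, where `Q` is block diagonal with
blocks `n⁻¹ (I - J/(m+n))` and `m⁻¹ (I - J/(m+n))`. A direct computation shows that `A Aᵀ Q` fixes
every balanced vector `(a;b)` (one with `∑ a = ∑ b`). The range of `A` consists of balanced vectors,
so `A P A = A`, and `P A = Aᵀ Q A` is symmetric. These two Moore–Penrose identities give
`A y = (a;b)`. Because `P = Aᵀ Q`, the difference `x - y = Aᵀ (Pᵀ x - Q (a;b))` lies in the range
of `Aᵀ`.
-/

open Matrix

namespace Matrix

variable {R ι κ : Type*} [CommRing R] [Fintype ι] [Fintype κ]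

theorem mulVec_mulVec_add_sub_eq {A : Matrix ι κ R} {P : Matrix κ ι R}
    (hPA : (P * A)ᵀ = P * A) (hAPA : A * P * A = A) {u : ι → R} (hu : A *ᵥ (P *ᵥ u) = u)
    (x : κ → R) : A *ᵥ (P *ᵥ u + (x - Aᵀ *ᵥ (Pᵀ *ᵥ x))) = u := by
  have hAAP : A *ᵥ (Aᵀ *ᵥ (Pᵀ *ᵥ x)) = A *ᵥ x := by
    rw [mulVec_mulVec (M := Aᵀ), ← transpose_mul, hPA, mulVec_mulVec, ← Matrix.mul_assoc, hAPA]
  rw [mulVec_add, mulVec_sub, hu, hAAP, sub_self, add_zero]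

theorem exists_add_transpose_mulVec_eq {A : Matrix ι κ R} {P : Matrix κ ι R}
    {Q : Matrix ι ι R} (hP : P = Aᵀ * Q) (u : ι → R) (x : κ → R) :
    ∃ w, P *ᵥ u + (x - Aᵀ *ᵥ (Pᵀ *ᵥ x)) + Aᵀ *ᵥ w = x :=
  ⟨Pᵀ *ᵥ x - Q *ᵥ u, by rw [mulVec_sub, hP, ← mulVec_mulVec]; abel⟩

end Matrix

namespace Marginal

variable (K ι κ : Type*) [Field K] [Fintype ι] [Fintype κ] [DecidableEq ι] [DecidableEq κ]

def matrix : Matrix (ι ⊕ κ) (ι × κ) K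
  | .inl i, pq => if pq.1 = i then 1 else 0
  | .inr j, pq => if pq.2 = j then 1 else 0

/-- A generalized inverse of `matrix K ι κ * (matrix K ι κ)ᵀ`: it inverts the Gram matrix on the
balanced vectors. -/
def gramInv : Matrix (ι ⊕ κ) (ι ⊕ κ) K
  | .inl i, .inl i' =>
    (Fintype.card κ : K)⁻¹ * ((if i = i' then 1 else 0) - (Fintype.card ι + Fintype.card κ : K)⁻¹)
  | .inr j, .inr j' =>
    (Fintype.card ι : K)⁻¹ * ((if j = j' then 1 else 0) - (Fintype.card ι + Fintype.card κ : K)⁻¹)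
  | _, _ => 0

/-- The Moore–Penrose pseudoinverse `P` of `matrix K ι κ`. -/
def pinv : Matrix (ι × κ) (ι ⊕ κ) K := (matrix K ι κ)ᵀ * gramInv K ι κ

variable {K ι κ}

theorem matrix_mulVec (v : ι × κ → K) :
    matrix K ι κ *ᵥ v = Sum.elim (fun i => ∑ j, v (i, j)) (fun j => ∑ i, v (i, j)) := by
  ext (i | j)
  · simp only [matrix, mulVec, dotProduct, Fintype.sum_prod_type, ite_mul, one_mul, zero_mul]
    rw [Finset.sum_comm]
    simp
  · simp [matrix, mulVec, dotProduct, Fintype.sum_prod_type]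

theorem matrix_transpose_mulVec (w : ι ⊕ κ → K) :
    (matrix K ι κ)ᵀ *ᵥ w = fun pq => w (.inl pq.1) + w (.inr pq.2) := by
  ext ⟨i, j⟩
  simp [matrix, mulVec, dotProduct, Fintype.sum_sum_type]

theorem gramInv_transpose : (gramInv K ι κ)ᵀ = gramInv K ι κ := by
  ext (i | j) (i' | j') <;> simp [gramInv, eq_comm]

theorem gramInv_mulVec (u : ι ⊕ κ → K) :
    gramInv K ι κ *ᵥ u = Sum.elim
      (fun i => (Fintype.card κ : K)⁻¹ *
        (u (.inl i) - (Fintype.card ι + Fintype.card κ : K)⁻¹ * ∑ i', u (.inl i')))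
      (fun j => (Fintype.card ι : K)⁻¹ *
        (u (.inr j) - (Fintype.card ι + Fintype.card κ : K)⁻¹ * ∑ j', u (.inr j'))) := by
  ext (i | j) <;> simp [gramInv, mulVec, dotProduct, Fintype.sum_sum_type, mul_sub, sub_mul,
    ite_mul, Finset.sum_sub_distrib, ← Finset.mul_sum, mul_assoc]

theorem matrix_mulVec_matrix_transpose_mulVec_gramInv_mulVec [CharZero K] [Nonempty ι]
    [Nonempty κ] {u : ι ⊕ κ → K} (hu : ∑ i, u (.inl i) = ∑ j, u (.inr j)) :
    matrix K ι κ *ᵥ ((matrix K ι κ)ᵀ *ᵥ (gramInv K ι κ *ᵥ u)) = u := by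
  have hι : (Fintype.card ι : K) ≠ 0 := by simp
  have hκ : (Fintype.card κ : K) ≠ 0 := by simp
  have hικ : (Fintype.card ι + Fintype.card κ : K) ≠ 0 := by norm_cast; positivity
  ext (i | j) <;>
    simp only [matrix_mulVec, matrix_transpose_mulVec, gramInv_mulVec, Sum.elim_inl,
      Sum.elim_inr, Finset.sum_add_distrib, Finset.sum_sub_distrib, Finset.sum_const,
      Finset.card_univ, nsmul_eq_mul, ← Finset.mul_sum] <;>
    field_simp
  · linear_combination -(Fintype.card ι : K) * hu
  · linear_combination (Fintype.card κ : K) * hu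

theorem matrix_mulVec_sum_inl_eq_sum_inr (v : ι × κ → K) :
    ∑ i, (matrix K ι κ *ᵥ v) (.inl i) = ∑ j, (matrix K ι κ *ᵥ v) (.inr j) := by
  simp only [matrix_mulVec, Sum.elim_inl, Sum.elim_inr]
  exact Finset.sum_comm

theorem pinv_apply_inl (p : ι) (q : κ) (i : ι) :
    pinv K ι κ (p, q) (.inl i) = (Fintype.card κ : K)⁻¹ *
      ((if p = i then 1 else 0) - (Fintype.card ι + Fintype.card κ : K)⁻¹) := by
  simp [pinv, mul_apply, Fintype.sum_sum_type, matrix, gramInv]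

theorem pinv_apply_inr (p : ι) (q : κ) (j : κ) :
    pinv K ι κ (p, q) (.inr j) = (Fintype.card ι : K)⁻¹ *
      ((if q = j then 1 else 0) - (Fintype.card ι + Fintype.card κ : K)⁻¹) := by
  simp [pinv, mul_apply, Fintype.sum_sum_type, matrix, gramInv]

theorem transpose_pinv_mul_matrix : (pinv K ι κ * matrix K ι κ)ᵀ = pinv K ι κ * matrix K ι κ := by
  rw [pinv, transpose_mul, transpose_mul, gramInv_transpose, transpose_transpose,
    Matrix.mul_assoc]

variable [CharZero K] [Nonempty ι] [Nonempty κ]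

theorem matrix_mulVec_pinv_mulVec {u : ι ⊕ κ → K} (hu : ∑ i, u (.inl i) = ∑ j, u (.inr j)) :
    matrix K ι κ *ᵥ (pinv K ι κ *ᵥ u) = u := by
  rw [pinv, ← mulVec_mulVec, matrix_mulVec_matrix_transpose_mulVec_gramInv_mulVec hu]

theorem matrix_mul_pinv_mul_matrix : matrix K ι κ * pinv K ι κ * matrix K ι κ = matrix K ι κ :=
  ext_iff_mulVec.2 fun v => by
    rw [← mulVec_mulVec, ← mulVec_mulVec,
      matrix_mulVec_pinv_mulVec (matrix_mulVec_sum_inl_eq_sum_inr v)]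

end Marginal

/-- **KKT conditions for projection onto the marginal constraints (Lemma, via the
pseudoinverse).** With `A` the row/column-sum constraint matrix, `P` its pseudoinverse,
and `∑ a = ∑ b`, the vector `y = P (a;b) + (x - Aᵀ Pᵀ x)` satisfies `A y = (a;b)` and
`y + Aᵀ w = x` for some `w`. -/
theorem projection_KKT_solution
    (m n : ℕ) (hm : 1 ≤ m) (hn : 1 ≤ n)
    (A : Matrix (Fin m ⊕ Fin n) (Fin m × Fin n) ℝ)
    (hA : ∀ (i : Fin m) (p : Fin m) (q : Fin n),
      A (Sum.inl i) (p, q) = if p = i then 1 else 0)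
    (hA' : ∀ (j : Fin n) (p : Fin m) (q : Fin n),
      A (Sum.inr j) (p, q) = if q = j then 1 else 0)
    (P : Matrix (Fin m × Fin n) (Fin m ⊕ Fin n) ℝ)
    (hP : ∀ (i : Fin m) (p : Fin m) (q : Fin n),
      P (p, q) (Sum.inl i) =
        (1 / (n : ℝ)) * ((if p = i then 1 else 0) - 1 / ((m : ℝ) + (n : ℝ))))
    (hP' : ∀ (j : Fin n) (p : Fin m) (q : Fin n),
      P (p, q) (Sum.inr j) =
        (1 / (m : ℝ)) * ((if q = j then 1 else 0) - 1 / ((m : ℝ) + (n : ℝ))))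
    (a : Fin m → ℝ) (b : Fin n → ℝ)
    (hab : ∑ i, a i = ∑ j, b j)
    (x : Fin m × Fin n → ℝ)
    (y : Fin m × Fin n → ℝ)
    (hy : y = P.mulVec (Sum.elim a b) + (x - Aᵀ.mulVec (Pᵀ.mulVec x))) :
    A.mulVec y = Sum.elim a b ∧ ∃ w : Fin m ⊕ Fin n → ℝ, y + Aᵀ.mulVec w = x := by
  have : Nonempty (Fin m) := ⟨⟨0, hm⟩⟩
  have : Nonempty (Fin n) := ⟨⟨0, hn⟩⟩
  obtain rfl : A = Marginal.matrix ℝ (Fin m) (Fin n) := by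
    ext (i | j) ⟨p, q⟩
    · exact hA i p q
    · exact hA' j p q
  obtain rfl : P = Marginal.pinv ℝ (Fin m) (Fin n) := by
    ext ⟨p, q⟩ (i | j)
    · simp [hP, Marginal.pinv_apply_inl]
    · simp [hP', Marginal.pinv_apply_inr]
  subst hy
  exact ⟨mulVec_mulVec_add_sub_eq Marginal.transpose_pinv_mul_matrix
      Marginal.matrix_mul_pinv_mul_matrix (Marginal.matrix_mulVec_pinv_mulVec hab) x,
    exists_add_transpose_mulVec_eq rfl _ x⟩
end

section
/- Let N ≥ 0 and let y_1 ≥ y_2 ≥ ⋯ ≥ y_{N+1} be real numbers. Fix r with 1 ≤ r ≤ N+1 and set v := y_r. For integers 0 ≤ s ≤ r−1 define τ(s) := (v + ∑_{ℓ=1}^{s} y_ℓ)/(s+1), and define t as follows: if the set S := {s : 1 ≤ s ≤ r−1 and τ(s) > y_s} is nonempty then t := (min S) − 1, otherwise t := r − 1. Then τ(t) ≥ y_{t+1}, and if t ≥ 1 then also τ(t) ≤ y_t (and hence τ(t) ≤ y_t ≤ y_{t-1} ≤ ⋯ ≤ y_1). -/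
/-!
`τ (s + 1)` is the weighted mean of `τ s` (weight `s + 1`) and `y (s + 1)` (weight `1`), so
`y (s + 1) < τ (s + 1)` forces `y (s + 1) < τ s`; this gives the first claim when `t + 1 ∈ S`.
When `S` is empty, `t + 1 = r` and `τ (r - 1)` averages `v = y r` with values `≥ v`.
The second claim is `t ∉ S`, which holds because `t < min S`.
-/

section PooledAverage

variable {K : Type*} [Field K] [LinearOrder K] [IsStrictOrderedRing K]

def pooledAverage (v : K) (y : ℕ → K) (s : ℕ) : K :=
  (v + ∑ ℓ ∈ Finset.Icc 1 s, y ℓ) / (s + 1)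

lemma le_pooledAverage {v : K} {y : ℕ → K} {s : ℕ} (h : ∀ ℓ ∈ Finset.Icc 1 s, v ≤ y ℓ) :
    v ≤ pooledAverage v y s := by
  have hsum : (s : K) * v ≤ ∑ ℓ ∈ Finset.Icc 1 s, y ℓ := by
    simpa using Finset.card_nsmul_le_sum _ _ v h
  rw [pooledAverage, le_div_iff₀ (by positivity)]
  linarith

lemma pooledAverage_succ (v : K) (y : ℕ → K) (s : ℕ) :
    pooledAverage v y (s + 1) = ((s + 1) * pooledAverage v y s + y (s + 1)) / (s + 2) := by
  have hs : (s : K) + 1 ≠ 0 := by positivity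
  simp only [pooledAverage, Finset.sum_Icc_succ_top (Nat.le_add_left 1 s)]
  field_simp
  push_cast
  ring

lemma lt_pooledAverage_of_lt_pooledAverage_succ {v : K} {y : ℕ → K} {s : ℕ}
    (h : y (s + 1) < pooledAverage v y (s + 1)) : y (s + 1) < pooledAverage v y s := by
  rw [pooledAverage_succ, lt_div_iff₀ (by positivity)] at h
  have hs : (0 : K) < s + 1 := by positivity
  nlinarith

end PooledAverage

lemma Nat.pred_sInf_notMem_and_sInf_mem {S : Set ℕ} (hS : S.Nonempty) (h0 : 0 ∉ S) :
    sInf S - 1 ∉ S ∧ sInf S - 1 + 1 ∈ S := by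
  have hmem := Nat.sInf_mem hS
  have hpos : 0 < sInf S := Nat.pos_of_ne_zero fun h ↦ h0 (h ▸ hmem)
  exact ⟨Nat.notMem_of_lt_sInf (Nat.sub_one_lt_of_lt hpos), Nat.sub_one_add_one_eq_of_pos hpos ▸ hmem⟩

/-- **Properties of the pooling threshold (Lemma 1 for ePAVA).**
For a nonincreasing sequence `y 1 ≥ ⋯ ≥ y (N+1)`, rank `r` with `v = y r`,
pooled averages `τ s = (v + ∑_{ℓ=1}^s y ℓ)/(s+1)`, and
`t = (min {s | 1 ≤ s ≤ r-1, τ s > y s}) - 1` (or `t = r - 1` if that set is empty),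
one has `τ t ≥ y (t+1)` and, if `t ≥ 1`, also `τ t ≤ y t`. -/
theorem pooling_threshold_properties
    (N : ℕ) (y : ℕ → ℝ)
    (hy : ∀ ℓ ℓ', 1 ≤ ℓ → ℓ ≤ ℓ' → ℓ' ≤ N + 1 → y ℓ' ≤ y ℓ)
    (r : ℕ) (hr1 : 1 ≤ r) (hr2 : r ≤ N + 1)
    (v : ℝ) (hv : v = y r)
    (τ : ℕ → ℝ) (hτ : ∀ s, τ s = (v + ∑ ℓ ∈ Finset.Icc 1 s, y ℓ) / (s + 1))
    (S : Set ℕ) (hS : S = {s | 1 ≤ s ∧ s ≤ r - 1 ∧ τ s > y s})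
    (t : ℕ)
    (ht1 : S.Nonempty → t = sInf S - 1)
    (ht2 : ¬ S.Nonempty → t = r - 1) :
    y (t + 1) ≤ τ t ∧ (1 ≤ t → τ t ≤ y t) := by
  obtain rfl : τ = pooledAverage v y := funext hτ
  have hmem (s : ℕ) : s ∈ S ↔ 1 ≤ s ∧ s ≤ r - 1 ∧ pooledAverage v y s > y s := by rw [hS]; rfl
  suffices h : y (t + 1) ≤ pooledAverage v y t ∧ t ∉ S ∧ t ≤ r - 1 by
    obtain ⟨hfirst, htS, htr⟩ := h
    exact ⟨hfirst, fun ht ↦ not_lt.mp fun hlt ↦ htS ((hmem t).mpr ⟨ht, htr, hlt⟩)⟩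
  by_cases hne : S.Nonempty
  · obtain rfl := ht1 hne
    have h0 : 0 ∉ S := fun h ↦ by simp [hmem] at h
    obtain ⟨htS, hsucc⟩ := Nat.pred_sInf_notMem_and_sInf_mem hne h0
    obtain ⟨-, hsucc_le, hsucc_lt⟩ := (hmem _).mp hsucc
    exact ⟨(lt_pooledAverage_of_lt_pooledAverage_succ hsucc_lt).le, htS, by omega⟩
  · obtain rfl := ht2 hne
    refine ⟨?_, fun h ↦ hne ⟨_, h⟩, le_rfl⟩
    rw [Nat.sub_one_add_one_eq_of_pos hr1, ← hv]
    refine le_pooledAverage fun ℓ hℓ ↦ hv ▸ ?_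
    obtain ⟨hℓ1, hℓr⟩ := Finset.mem_Icc.mp hℓ
    exact hy ℓ r hℓ1 (by omega) hr2
end

section
/- Let N ≥ 0 and let y_1 ≥ y_2 ≥ ⋯ ≥ y_{N+1} be real numbers. Fix r with 1 ≤ r ≤ N+1 and set v := y_r. For integers 0 ≤ s ≤ r−1 define τ(s) := (v + ∑_{ℓ=1}^{s} y_ℓ)/(s+1), and define t as follows: if the set S := {s : 1 ≤ s ≤ r−1 and τ(s) > y_s} is nonempty then t := (min S) − 1, otherwise t := r − 1. Suppose there exists s with 1 ≤ s ≤ t such that y_ℓ ≥ 0 for all 1 ≤ ℓ ≤ s−1 and y_s < 0. If τ(t) < 0, then v < 0 and ∑_{ℓ=1}^{s−1} y_ℓ < −v. -/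
/-!
Adding a value that is at least the new pooled average cannot lower the average. Every `k`
with `1 ≤ k ≤ t` lies below the first violation `min S`, so `τ k ≤ y k`, and hence `τ` is
nondecreasing on `[0, t]`. Thus `v = τ 0 ≤ τ t < 0`, and `τ (s - 1) ≤ τ t < 0` says
`v + ∑_{ℓ < s} y ℓ < 0`.
-/

open Finset

theorem div_le_add_div_add_one {K : Type*} [Field K] [LinearOrder K] [IsStrictOrderedRing K]
    {A x n : K} (hn : 0 < n) (h : (A + x) / (n + 1) ≤ x) :
    A / n ≤ (A + x) / (n + 1) := by
  rw [div_le_iff₀ (by linarith)] at h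
  rw [div_le_div_iff₀ hn (by linarith)]
  nlinarith

noncomputable def pooledMean (y : ℕ → ℝ) (v : ℝ) (s : ℕ) : ℝ :=
  (v + ∑ ℓ ∈ Icc 1 s, y ℓ) / (s + 1)

namespace pooledMean

variable {y : ℕ → ℝ} {v : ℝ}

@[simp]
theorem zero : pooledMean y v 0 = v := by
  simp [pooledMean]

theorem le_succ {k : ℕ} (h : pooledMean y v (k + 1) ≤ y (k + 1)) :
    pooledMean y v k ≤ pooledMean y v (k + 1) := by
  unfold pooledMean at h ⊢
  rw [sum_Icc_succ_top (by omega), ← add_assoc] at h ⊢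
  push_cast at h ⊢
  exact div_le_add_div_add_one (by positivity) h

theorem monotoneOn_Iic {t : ℕ} (h : ∀ k, 1 ≤ k → k ≤ t → pooledMean y v k ≤ y k) :
    MonotoneOn (pooledMean y v) (Set.Iic t) :=
  monotoneOn_of_le_succ Set.ordConnected_Iic fun k _ _ hk =>
    le_succ (h (k + 1) (by omega) (by simpa using hk))

end pooledMean

section FirstViolation

variable {P : ℕ → Prop} {m t : ℕ}

theorem le_of_firstViolation (ht1 : {s | 1 ≤ s ∧ s ≤ m ∧ P s}.Nonempty →
      t = sInf {s | 1 ≤ s ∧ s ≤ m ∧ P s} - 1)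
    (ht2 : ¬ {s | 1 ≤ s ∧ s ≤ m ∧ P s}.Nonempty → t = m) : t ≤ m := by
  by_cases hne : {s | 1 ≤ s ∧ s ≤ m ∧ P s}.Nonempty
  · obtain ⟨-, hle, -⟩ := Nat.sInf_mem hne
    have := ht1 hne
    omega
  · exact (ht2 hne).le

theorem not_of_le_firstViolation (ht1 : {s | 1 ≤ s ∧ s ≤ m ∧ P s}.Nonempty →
      t = sInf {s | 1 ≤ s ∧ s ≤ m ∧ P s} - 1)
    {k : ℕ} (hk1 : 1 ≤ k) (hkt : k ≤ t) (hkm : k ≤ m) : ¬ P k := by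
  intro hP
  have hkS : k ∈ {s | 1 ≤ s ∧ s ≤ m ∧ P s} := ⟨hk1, hkm, hP⟩
  have := Nat.sInf_le hkS
  have := ht1 ⟨k, hkS⟩
  omega

end FirstViolation

theorem pooling_threshold_negative_case_general
    (y : ℕ → ℝ)
    (r : ℕ)
    (v : ℝ)
    (τ : ℕ → ℝ) (hτ : ∀ s, τ s = (v + ∑ ℓ ∈ Finset.Icc 1 s, y ℓ) / (s + 1))
    (S : Set ℕ) (hS : S = {s | 1 ≤ s ∧ s ≤ r - 1 ∧ τ s > y s})
    (t : ℕ)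
    (ht1 : S.Nonempty → t = sInf S - 1)
    (ht2 : ¬ S.Nonempty → t = r - 1)
    (s : ℕ) (hs2 : s ≤ t)
    (hτt : τ t < 0) :
    v < 0 ∧ ∑ ℓ ∈ Finset.Icc 1 (s - 1), y ℓ < -v := by
  obtain rfl : τ = pooledMean y v := funext hτ
  subst hS
  have htr := le_of_firstViolation ht1 ht2
  have hmono := pooledMean.monotoneOn_Iic fun k hk1 hkt =>
    not_lt.mp (not_of_le_firstViolation ht1 hk1 hkt (hkt.trans htr))
  have hneg : ∀ k ≤ t, pooledMean y v k < 0 := fun k hk =>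
    (hmono hk (le_refl t) hk).trans_lt hτt
  refine ⟨by simpa using hneg 0 t.zero_le, ?_⟩
  linarith [neg_of_div_neg_left (hneg (s - 1) (by omega)) (by positivity)]

/-- **Negative pooling threshold (Lemma 2 for ePAVA).**
In the setting of the pooling threshold lemma, if `s ≤ t` is the least-ranked index
with `y s < 0` (all earlier terms being nonnegative) and `τ t < 0`, then `v < 0`
and `∑_{ℓ=1}^{s-1} y ℓ < -v`. -/
theorem pooling_threshold_negative_case
    (N : ℕ) (y : ℕ → ℝ)
    (hy : ∀ ℓ ℓ', 1 ≤ ℓ → ℓ ≤ ℓ' → ℓ' ≤ N + 1 → y ℓ' ≤ y ℓ)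
    (r : ℕ) (hr1 : 1 ≤ r) (hr2 : r ≤ N + 1)
    (v : ℝ) (hv : v = y r)
    (τ : ℕ → ℝ) (hτ : ∀ s, τ s = (v + ∑ ℓ ∈ Finset.Icc 1 s, y ℓ) / (s + 1))
    (S : Set ℕ) (hS : S = {s | 1 ≤ s ∧ s ≤ r - 1 ∧ τ s > y s})
    (t : ℕ)
    (ht1 : S.Nonempty → t = sInf S - 1)
    (ht2 : ¬ S.Nonempty → t = r - 1)
    (s : ℕ) (hs1 : 1 ≤ s) (hs2 : s ≤ t)
    (hs3 : ∀ ℓ, 1 ≤ ℓ → ℓ ≤ s - 1 → 0 ≤ y ℓ)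
    (hs4 : y s < 0)
    (hτt : τ t < 0) :
    v < 0 ∧ ∑ ℓ ∈ Finset.Icc 1 (s - 1), y ℓ < -v :=
  pooling_threshold_negative_case_general y r v τ hτ S hS t ht1 ht2 s hs2 hτt
end

section
/- Let m, n ≥ 1, fix (i,j) ∈ [m]×[n], let V := ([m]×[n]) \ {(i,j)}, let X ∈ ℝ^{m×n}, and let η ≥ 0. Let e : {1,…,mn−1} → V be a bijection such that w_ℓ := X_{e(ℓ)} is nonincreasing in ℓ, set v := X_{ij} − η, r := 1 + #{ℓ : w_ℓ > v}, τ(s) := (v + ∑_{ℓ=1}^{s} w_ℓ)/(s+1) for 0 ≤ s ≤ r−1, and t := (min{s : 1 ≤ s ≤ r−1, τ(s) > w_s}) − 1 if such s exists, and t := r−1 otherwise. Define Y ∈ ℝ^{m×n} by Y_{ij} := max(τ(t), 0), Y_{e(ℓ)} := max(τ(t), 0) for 1 ≤ ℓ ≤ t, and Y_{e(ℓ)} := max(w_ℓ, 0) for ℓ > t. Then there exist Lagrange multipliers λ : V → ℝ and δ : V ∪ {(i,j)} → ℝ such that: λ_{pq} ≥ 0 and δ_{pq} ≥ 0 for all indices;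 Y_{pq} = X_{pq} − λ_{pq} + δ_{pq} for all (p,q) ∈ V; Y_{ij} = X_{ij} − η + ∑_{(p,q)∈V} λ_{pq} + δ_{ij}; Y_{pq} ≤ Y_{ij} for all (p,q) ∈ V; Y_{pq} ≥ 0 for all (p,q) ∈ V ∪ {(i,j)}; λ_{pq}(Y_{pq} − Y_{ij}) = 0 for all (p,q) ∈ V; and δ_{pq} Y_{pq} = 0 for all (p,q) ∈ V ∪ {(i,j)}. -/
/-!
The projection has the closed form `Y = max (min X c) 0` off `(i, j)` and `Y i j = max c 0`,
where the threshold `c` solves `c = v + ∑_{V} max (X - c) 0`: the constrained entries above `c`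
are pulled down to it, and the total amount removed is exactly what lifts `v` up to `c`.
The multipliers are then forced: `λ = max (X - c) 0` measures the pull-down, and `δ` is the
amount by which clipping at `0` raises the unclipped value.

Sorting the constrained entries as `w₁ ≥ w₂ ≥ ⋯`, the threshold is the pooled average
`τ t = (v + w₁ + ⋯ + w_t) / (t + 1)` at the cut `t`: the first `t` entries lie above `τ t`
because `t + 1` is the first index with `w_s < τ s`, and the remaining ones lie below it,
either because `w_{t+1} < τ (t+1)` forces `w_{t+1} < τ t`, or because they do not exceed `v`,
which is itself below `τ t`.
-/

open Finset

lemma max_zero_sub_mul_max_zero (a : ℝ) : (max a 0 - a) * max a 0 = 0 := by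
  rcases le_total 0 a with h | h <;> simp [h]

/-- KKT conditions for projecting onto `{y ≥ 0, y k ≤ y o for k ≠ o}` with the entry `o`
replaced by `v`, once the threshold `c` is known. -/
theorem exists_kkt_of_threshold {ι : Type*} [Fintype ι] [DecidableEq ι] (o : ι)
    (x y : ι → ℝ) (v c : ℝ) (hc : c = v + ∑ k ∈ univ.erase o, max (x k - c) 0)
    (hyo : y o = max c 0) (hy : ∀ k, k ≠ o → y k = max (min (x k) c) 0) :
    ∃ lam del : ι → ℝ,
      (∀ k, k ≠ o → 0 ≤ lam k) ∧
      (∀ k, 0 ≤ del k) ∧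
      (∀ k, k ≠ o → y k = x k - lam k + del k) ∧
      (y o = v + (∑ k ∈ univ.erase o, lam k) + del o) ∧
      (∀ k, k ≠ o → y k ≤ y o) ∧
      (∀ k, 0 ≤ y k) ∧
      (∀ k, k ≠ o → lam k * (y k - y o) = 0) ∧
      (∀ k, del k * y k = 0) := by
  set z : ι → ℝ := fun k => if k = o then c else min (x k) c
  have hyz : ∀ k, y k = max (z k) 0 := fun k => by
    by_cases hk : k = o
    · subst hk; simp [z, hyo]
    · simp [z, hk, hy k hk]
  refine ⟨fun k => max (x k - c) 0, fun k => max (z k) 0 - z k, fun k _ => le_max_right _ _,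
    fun k => sub_nonneg.2 (le_max_left _ _), fun k hk => ?_, ?_, fun k hk => ?_,
    fun k => by simp [hyz], fun k hk => ?_,
    fun k => by rw [hyz]; exact max_zero_sub_mul_max_zero _⟩
  · rw [hyz]
    rcases le_total (x k) c with h | h <;> simp [z, hk, h, sub_nonpos.2]
  · simp only [hyz, z, if_pos rfl]
    linarith
  · rw [hy k hk, hyo]
    exact max_le_max (min_le_right _ _) le_rfl
  · rcases le_total (x k) c with h | h
    · simp [h]
    · simp [hy k hk, hyo, h]

noncomputable def poolAvg (v : ℝ) (w : ℕ → ℝ) (s : ℕ) : ℝ :=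
  (v + ∑ ℓ ∈ Icc 1 s, w ℓ) / (s + 1)

section PoolAvg

variable {v : ℝ} {w : ℕ → ℝ}

lemma mul_poolAvg (s : ℕ) : (s + 1) * poolAvg v w s = v + ∑ ℓ ∈ Icc 1 s, w ℓ := by
  rw [poolAvg]
  field_simp

lemma sum_sub_poolAvg (s : ℕ) : ∑ ℓ ∈ Icc 1 s, (w ℓ - poolAvg v w s) = poolAvg v w s - v := by
  rw [sum_sub_distrib, sum_const, Nat.card_Icc, nsmul_eq_mul, add_tsub_cancel_right]
  linarith [mul_poolAvg (v := v) (w := w) s]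

lemma lt_poolAvg_succ_iff (s : ℕ) :
    w (s + 1) < poolAvg v w (s + 1) ↔ w (s + 1) < poolAvg v w s := by
  have h := mul_poolAvg (v := v) (w := w) (s + 1)
  rw [sum_Icc_succ_top (by omega), ← add_assoc, ← mul_poolAvg] at h
  push_cast at h
  have hs : (0 : ℝ) < s + 1 := by positivity
  constructor <;> intro hlt <;> nlinarith

lemma le_poolAvg_of_forall_poolAvg_le {s : ℕ} (h : ∀ ℓ ∈ Icc 1 s, poolAvg v w s ≤ w ℓ) :
    v ≤ poolAvg v w s := by
  have := sum_nonneg fun ℓ hℓ => sub_nonneg.2 (h ℓ hℓ)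
  rw [sum_sub_poolAvg] at this
  linarith

variable {N t : ℕ}

lemma poolAvg_le_of_not_lt (hw : AntitoneOn w (Set.Icc 1 N)) (htN : t ≤ N)
    (hcut : 1 ≤ t → ¬ w t < poolAvg v w t) : ∀ ℓ ∈ Icc 1 t, poolAvg v w t ≤ w ℓ := by
  intro ℓ hℓ
  rw [mem_Icc] at hℓ
  calc poolAvg v w t ≤ w t := not_lt.1 (hcut (hℓ.1.trans hℓ.2))
    _ ≤ w ℓ := hw ⟨hℓ.1, hℓ.2.trans htN⟩ ⟨hℓ.1.trans hℓ.2, htN⟩ hℓ.2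

lemma le_poolAvg_of_lt (hw : AntitoneOn w (Set.Icc 1 N))
    (hle : ∀ ℓ ∈ Icc 1 t, poolAvg v w t ≤ w ℓ)
    (hnext : w (t + 1) < poolAvg v w (t + 1) ∨ ∀ ℓ ∈ Icc 1 N, t < ℓ → w ℓ ≤ v) :
    ∀ ℓ ∈ Icc 1 N, t < ℓ → w ℓ ≤ poolAvg v w t := by
  intro ℓ hℓ htℓ
  rcases hnext with hnext | hnext
  · have hℓ' := mem_Icc.1 hℓ
    calc w ℓ ≤ w (t + 1) := hw ⟨by omega, by omega⟩ hℓ' htℓ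
      _ ≤ poolAvg v w t := ((lt_poolAvg_succ_iff t).1 hnext).le
  · exact (hnext ℓ hℓ htℓ).trans (le_poolAvg_of_forall_poolAvg_le hle)

lemma sum_max_sub_poolAvg (htN : t ≤ N) (hle : ∀ ℓ ∈ Icc 1 t, poolAvg v w t ≤ w ℓ)
    (hge : ∀ ℓ ∈ Icc 1 N, t < ℓ → w ℓ ≤ poolAvg v w t) :
    ∑ ℓ ∈ Icc 1 N, max (w ℓ - poolAvg v w t) 0 = poolAvg v w t - v := by
  rw [← sum_subset (Icc_subset_Icc_right htN), ← sum_sub_poolAvg t]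
  · exact sum_congr rfl fun ℓ hℓ => max_eq_left (sub_nonneg.2 (hle ℓ hℓ))
  · intro ℓ hℓN hℓt
    have htℓ : t < ℓ := not_le.1 fun h => hℓt (mem_Icc.2 ⟨(mem_Icc.1 hℓN).1, h⟩)
    exact max_eq_right (sub_nonpos.2 (hge ℓ hℓN htℓ))

end PoolAvg

lemma le_of_card_filter_lt_lt {α : Type*} [LinearOrder α] {w : ℕ → α} {v : α} {N ℓ : ℕ}
    (hw : AntitoneOn w (Set.Icc 1 N)) (hℓ : ℓ ∈ Icc 1 N)
    (hcard : #{k ∈ Icc 1 N | v < w k} < ℓ) : w ℓ ≤ v := by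
  by_contra! hvℓ
  have hsub : Icc 1 ℓ ⊆ {k ∈ Icc 1 N | v < w k} := by
    intro k hk
    have hk' := mem_Icc.1 hk
    have hℓ' := mem_Icc.1 hℓ
    exact mem_filter.2 ⟨mem_Icc.2 ⟨hk'.1, hk'.2.trans hℓ'.2⟩,
      hvℓ.trans_le (hw ⟨hk'.1, hk'.2.trans hℓ'.2⟩ hℓ' hk'.2)⟩
  have := card_le_card hsub
  rw [Nat.card_Icc] at this
  omega

lemma cut_index_spec (P : ℕ → Prop) {R t : ℕ}
    (ht1 : {s | 1 ≤ s ∧ s ≤ R ∧ P s}.Nonempty → t = sInf {s | 1 ≤ s ∧ s ≤ R ∧ P s} - 1)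
    (ht2 : ¬ {s | 1 ≤ s ∧ s ≤ R ∧ P s}.Nonempty → t = R) :
    t ≤ R ∧ (1 ≤ t → ¬ P t) ∧ (P (t + 1) ∨ t = R) := by
  by_cases hne : {s | 1 ≤ s ∧ s ≤ R ∧ P s}.Nonempty
  · obtain ⟨h1, h2, hP⟩ := Nat.sInf_mem hne
    have ht := ht1 hne
    have hnot : t ∉ {s | 1 ≤ s ∧ s ≤ R ∧ P s} := Nat.notMem_of_lt_sInf (by omega)
    refine ⟨by omega, fun h1t hPt => hnot ⟨h1t, by omega, hPt⟩, Or.inl ?_⟩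
    rwa [show t + 1 = sInf {s | 1 ≤ s ∧ s ≤ R ∧ P s} by omega]
  · have ht := ht2 hne
    exact ⟨ht.le, fun h1t hPt => hne ⟨t, h1t, ht.le, hPt⟩, Or.inr ht⟩

theorem ePAVA_single_constraint_KKT_general
    (m n : ℕ)
    (i : Fin m) (j : Fin n)
    (X : Matrix (Fin m) (Fin n) ℝ)
    (η : ℝ)
    (e : ℕ → Fin m × Fin n)
    (he1 : ∀ ℓ ∈ Finset.Icc 1 (m * n - 1), e ℓ ≠ (i, j))
    (he2 : ∀ ℓ ∈ Finset.Icc 1 (m * n - 1), ∀ ℓ' ∈ Finset.Icc 1 (m * n - 1),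
      e ℓ = e ℓ' → ℓ = ℓ')
    (he3 : ∀ pq : Fin m × Fin n, pq ≠ (i, j) → ∃ ℓ ∈ Finset.Icc 1 (m * n - 1), e ℓ = pq)
    (w : ℕ → ℝ) (hw : ∀ ℓ, w ℓ = X (e ℓ).1 (e ℓ).2)
    (hmono : ∀ ℓ ℓ', 1 ≤ ℓ → ℓ ≤ ℓ' → ℓ' ≤ m * n - 1 → w ℓ' ≤ w ℓ)
    (v : ℝ) (hv : v = X i j - η)
    (r : ℕ) (hr : r = 1 + ((Finset.Icc 1 (m * n - 1)).filter (fun ℓ => v < w ℓ)).card)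
    (τ : ℕ → ℝ) (hτ : ∀ s, τ s = (v + ∑ ℓ ∈ Finset.Icc 1 s, w ℓ) / (s + 1))
    (S : Set ℕ) (hS : S = {s | 1 ≤ s ∧ s ≤ r - 1 ∧ τ s > w s})
    (t : ℕ)
    (ht1 : S.Nonempty → t = sInf S - 1)
    (ht2 : ¬ S.Nonempty → t = r - 1)
    (Y : Matrix (Fin m) (Fin n) ℝ)
    (hYij : Y i j = max (τ t) 0)
    (hY1 : ∀ ℓ ∈ Finset.Icc 1 (m * n - 1), ℓ ≤ t → Y (e ℓ).1 (e ℓ).2 = max (τ t) 0)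
    (hY2 : ∀ ℓ ∈ Finset.Icc 1 (m * n - 1), t < ℓ → Y (e ℓ).1 (e ℓ).2 = max (w ℓ) 0) :
    ∃ lam del : Fin m × Fin n → ℝ,
      (∀ pq : Fin m × Fin n, pq ≠ (i, j) → 0 ≤ lam pq) ∧
      (∀ pq : Fin m × Fin n, 0 ≤ del pq) ∧
      (∀ p q, (p, q) ≠ (i, j) → Y p q = X p q - lam (p, q) + del (p, q)) ∧
      (Y i j = X i j - η + (∑ pq ∈ Finset.univ.erase (i, j), lam pq) + del (i, j)) ∧
      (∀ p q, (p, q) ≠ (i, j) → Y p q ≤ Y i j) ∧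
      (∀ p q, 0 ≤ Y p q) ∧
      (∀ p q, (p, q) ≠ (i, j) → lam (p, q) * (Y p q - Y i j) = 0) ∧
      (∀ p q, del (p, q) * Y p q = 0) := by
  obtain rfl : τ = poolAvg v w := funext hτ
  subst hS hr
  set N := m * n - 1
  have hanti : AntitoneOn w (Set.Icc 1 N) := fun a ha b hb hab => hmono a b ha.1 hab hb.2
  obtain ⟨htr, hnot, hnext⟩ := cut_index_spec (fun s => poolAvg v w s > w s) ht1 ht2
  have htN : t ≤ N := by
    have := card_filter_le (Icc 1 N) (fun ℓ => v < w ℓ)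
    rw [Nat.card_Icc] at this
    omega
  have hle := poolAvg_le_of_not_lt hanti htN hnot
  have hge := le_poolAvg_of_lt hanti hle (hnext.imp_right fun ht ℓ hℓ htℓ =>
    le_of_card_filter_lt_lt hanti hℓ (by omega))
  set c := poolAvg v w t
  have hY : ∀ pq : Fin m × Fin n, pq ≠ (i, j) →
      Y pq.1 pq.2 = max (min (X pq.1 pq.2) c) 0 := by
    intro pq hpq
    obtain ⟨ℓ, hℓ, rfl⟩ := he3 pq hpq
    rcases le_or_gt ℓ t with hℓt | htℓ
    · rw [hY1 ℓ hℓ hℓt, ← hw, min_eq_right (hle ℓ (mem_Icc.2 ⟨(mem_Icc.1 hℓ).1, hℓt⟩))]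
    · rw [hY2 ℓ hℓ htℓ, ← hw, min_eq_left (hge ℓ hℓ htℓ)]
  have hsum : ∑ pq ∈ univ.erase (i, j), max (X pq.1 pq.2 - c) 0
      = ∑ ℓ ∈ Icc 1 N, max (w ℓ - c) 0 :=
    (sum_nbij e (fun ℓ hℓ => mem_erase.2 ⟨he1 ℓ hℓ, mem_univ _⟩) (fun a ha b hb => he2 a ha b hb)
      (fun pq hpq => he3 pq (mem_erase.1 hpq).1) (fun ℓ _ => by rw [hw])).symm
  obtain ⟨lam, del, h1, h2, h3, h4, h5, h6, h7, h8⟩ :=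
    exists_kkt_of_threshold (i, j) (fun pq => X pq.1 pq.2) (fun pq => Y pq.1 pq.2) v _
      (by rw [hsum, sum_max_sub_poolAvg htN hle hge]; ring) hYij hY
  exact ⟨lam, del, h1, h2, fun p q => h3 (p, q), hv ▸ h4, fun p q => h5 (p, q),
    fun p q => h6 (p, q), fun p q => h7 (p, q), fun p q => h8 (p, q)⟩

/-- **KKT multipliers for the single-order-constraint projection (Lemma 3 for ePAVA).**
With `V = ([m]×[n]) \ {(i,j)}`, `e` an enumeration of `V` sorting `w ℓ = X (e ℓ)`
nonincreasingly, `v = X i j - η`, `r` the rank of `v`, pooled averages `τ`, cut index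
`t`, and `Y` the thresholded/clipped matrix, there exist Lagrange multipliers
`lam, del ≥ 0` satisfying stationarity, primal feasibility and complementary
slackness of the projection problem. -/
theorem ePAVA_single_constraint_KKT
    (m n : ℕ) (hm : 1 ≤ m) (hn : 1 ≤ n)
    (i : Fin m) (j : Fin n)
    (X : Matrix (Fin m) (Fin n) ℝ)
    (η : ℝ) (hη : 0 ≤ η)
    (e : ℕ → Fin m × Fin n)
    (he1 : ∀ ℓ ∈ Finset.Icc 1 (m * n - 1), e ℓ ≠ (i, j))
    (he2 : ∀ ℓ ∈ Finset.Icc 1 (m * n - 1), ∀ ℓ' ∈ Finset.Icc 1 (m * n - 1),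
      e ℓ = e ℓ' → ℓ = ℓ')
    (he3 : ∀ pq : Fin m × Fin n, pq ≠ (i, j) → ∃ ℓ ∈ Finset.Icc 1 (m * n - 1), e ℓ = pq)
    (w : ℕ → ℝ) (hw : ∀ ℓ, w ℓ = X (e ℓ).1 (e ℓ).2)
    (hmono : ∀ ℓ ℓ', 1 ≤ ℓ → ℓ ≤ ℓ' → ℓ' ≤ m * n - 1 → w ℓ' ≤ w ℓ)
    (v : ℝ) (hv : v = X i j - η)
    (r : ℕ) (hr : r = 1 + ((Finset.Icc 1 (m * n - 1)).filter (fun ℓ => v < w ℓ)).card)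
    (τ : ℕ → ℝ) (hτ : ∀ s, τ s = (v + ∑ ℓ ∈ Finset.Icc 1 s, w ℓ) / (s + 1))
    (S : Set ℕ) (hS : S = {s | 1 ≤ s ∧ s ≤ r - 1 ∧ τ s > w s})
    (t : ℕ)
    (ht1 : S.Nonempty → t = sInf S - 1)
    (ht2 : ¬ S.Nonempty → t = r - 1)
    (Y : Matrix (Fin m) (Fin n) ℝ)
    (hYij : Y i j = max (τ t) 0)
    (hY1 : ∀ ℓ ∈ Finset.Icc 1 (m * n - 1), ℓ ≤ t → Y (e ℓ).1 (e ℓ).2 = max (τ t) 0)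
    (hY2 : ∀ ℓ ∈ Finset.Icc 1 (m * n - 1), t < ℓ → Y (e ℓ).1 (e ℓ).2 = max (w ℓ) 0) :
    ∃ lam del : Fin m × Fin n → ℝ,
      (∀ pq : Fin m × Fin n, pq ≠ (i, j) → 0 ≤ lam pq) ∧
      (∀ pq : Fin m × Fin n, 0 ≤ del pq) ∧
      (∀ p q, (p, q) ≠ (i, j) → Y p q = X p q - lam (p, q) + del (p, q)) ∧
      (Y i j = X i j - η + (∑ pq ∈ Finset.univ.erase (i, j), lam pq) + del (i, j)) ∧
      (∀ p q, (p, q) ≠ (i, j) → Y p q ≤ Y i j) ∧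
      (∀ p q, 0 ≤ Y p q) ∧
      (∀ p q, (p, q) ≠ (i, j) → lam (p, q) * (Y p q - Y i j) = 0) ∧
      (∀ p q, del (p, q) * Y p q = 0) :=
  ePAVA_single_constraint_KKT_general m n i j X η e he1 he2 he3 w hw hmono v hv r hr τ hτ S hS t ht1
    ht2 Y hYij hY1 hY2
end

section
/- Let m, n ≥ 1, fix (i,j) ∈ [m]×[n], let V := ([m]×[n]) \ {(i,j)}, and let X ∈ ℝ^{m×n}. Let e : {1,…,mn−1} → V be a bijection such that w_ℓ := X_{e(ℓ)} is nonincreasing in ℓ, set v := X_{ij}, r := 1 + #{ℓ : w_ℓ > v}, τ(s) := (v + ∑_{ℓ=1}^{s} w_ℓ)/(s+1) for 0 ≤ s ≤ r−1, and t := (min{s : 1 ≤ s ≤ r−1, τ(s) > w_s}) − 1 if such s exists, and t := r−1 otherwise. Define X̂ ∈ ℝ^{m×n} by X̂_{ij} := max(τ(t), 0), X̂_{e(ℓ)} := max(τ(t), 0) for 1 ≤ ℓ ≤ t, and X̂_{e(ℓ)} := max(w_ℓ, 0) for ℓ > t. Then X̂ is the Euclidean projection of X onto the closed convex set C := {Y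 ∈ ℝ^{m×n} : Y_{pq} ≥ 0 for all (p,q), and Y_{pq} ≤ Y_{ij} for all (p,q) ∈ V}: X̂ ∈ C, and ‖X̂ − X‖_F ≤ ‖Y − X‖_F for every Y ∈ C. -/
/-!
The matrix `X̂` satisfies the variational inequality `⟪X̂ - X, Y - X̂⟫ ≥ 0` for every feasible `Y`,
which gives optimality through `‖Y - X‖² = ‖X̂ - X‖² + ‖Y - X̂‖² + 2⟪X̂ - X, Y - X̂⟫`.

Entries past the cut index `t` are clipped at `0` one by one, i.e. projected onto `[0, ∞)`. The
pooled block `(i, j), e 1, …, e t` shares the value `θ = max (τ t) 0`. Since `τ (s + 1)` lies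
between `τ s` and `w (s + 1)`, the cut rule makes `τ` nondecreasing on `[0, t]`, and the first
failure of the rule (or the rank `r`) bounds every later `w ℓ` by `τ t`; this gives feasibility.
On the block, the inner product is at least
`Y i j * (θ - v + ∑ ℓ ≤ t, min (θ - w ℓ) 0) - θ * (t + 1) * (θ - τ t)`. The second term vanishes
because `θ = 0` or `θ = τ t`. The `w ℓ` exceeding `θ` form a prefix `1, …, u`, so the bracket is
`(u + 1) * (θ - τ u) ≥ 0`.
-/

open Finset

lemma min_zero_mul_le_mul {a y z : ℝ} (hz : 0 ≤ z) (hzy : z ≤ y) : min a 0 * y ≤ a * z := by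
  rcases le_total 0 a with ha | ha
  · rw [min_eq_right ha, zero_mul]
    exact mul_nonneg ha hz
  · rw [min_eq_left ha]
    exact mul_le_mul_of_nonpos_left hzy ha

lemma max_zero_sub_mul_sub_max_zero_nonneg {a y : ℝ} (hy : 0 ≤ y) :
    0 ≤ (max a 0 - a) * (y - max a 0) := by
  rcases le_total 0 a with ha | ha
  · simp [max_eq_left ha]
  · rw [max_eq_right ha]
    nlinarith

lemma max_zero_mul_max_zero_sub_self (a : ℝ) : max a 0 * (max a 0 - a) = 0 := by
  rcases le_total 0 a with ha | ha
  · rw [max_eq_left ha, sub_self, mul_zero]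
  · rw [max_eq_right ha, zero_mul]

lemma sum_sq_sub_le_of_sum_mul_nonneg {ι : Type*} (s : Finset ι) {a b c : ι → ℝ}
    (h : 0 ≤ ∑ i ∈ s, (b i - a i) * (c i - b i)) :
    ∑ i ∈ s, (b i - a i) ^ 2 ≤ ∑ i ∈ s, (c i - a i) ^ 2 := by
  have hexp : ∑ i ∈ s, (c i - a i) ^ 2 = ∑ i ∈ s, (b i - a i) ^ 2 + ∑ i ∈ s, (c i - b i) ^ 2 +
      2 * ∑ i ∈ s, (b i - a i) * (c i - b i) := by
    rw [mul_sum, ← sum_add_distrib, ← sum_add_distrib]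
    exact sum_congr rfl fun i _ => by ring
  have := sum_nonneg fun i (_ : i ∈ s) => sq_nonneg (c i - b i)
  linarith

lemma Fintype.sum_eq_add_sum_of_enum {α ι M : Type*} [Fintype α] [DecidableEq α]
    [AddCommMonoid M] (f : α → M) {a : α} {e : ι → α} {s : Finset ι}
    (he1 : ∀ ℓ ∈ s, e ℓ ≠ a) (he2 : Set.InjOn e s) (he3 : ∀ x, x ≠ a → ∃ ℓ ∈ s, e ℓ = x) :
    ∑ x, f x = f a + ∑ ℓ ∈ s, f (e ℓ) := by
  rw [Fintype.sum_eq_add_sum_compl a]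
  congr 1
  exact (sum_nbij e (fun ℓ hℓ => by simpa using he1 ℓ hℓ) he2
    (fun x hx => he3 x (by simpa using hx)) fun _ _ => rfl).symm

lemma Nat.sInf_sub_one_spec {P : ℕ → Prop} {b t : ℕ}
    (ht1 : {s | 1 ≤ s ∧ s ≤ b ∧ P s}.Nonempty → t = sInf {s | 1 ≤ s ∧ s ≤ b ∧ P s} - 1)
    (ht2 : ¬ {s | 1 ≤ s ∧ s ≤ b ∧ P s}.Nonempty → t = b) :
    t ≤ b ∧ (∀ s, 1 ≤ s → s ≤ t → ¬ P s) ∧ (t < b → P (t + 1)) := by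
  set S := {s | 1 ≤ s ∧ s ≤ b ∧ P s}
  by_cases hS : S.Nonempty
  · obtain ⟨hmem1, hmemb, hmemP⟩ := Nat.sInf_mem hS
    have ht := ht1 hS
    refine ⟨by omega, fun s hs1 hst hP => ?_, fun _ => ?_⟩
    · have : sInf S ≤ s := Nat.sInf_le ⟨hs1, by omega, hP⟩
      omega
    · rwa [show t + 1 = sInf S by omega]
  · have ht := ht2 hS
    exact ⟨ht.le, fun s hs1 hst hP => hS ⟨s, hs1, by omega, hP⟩, fun h => absurd ht h.ne⟩

section PoolAvg

variable {v : ℝ} {w : ℕ → ℝ}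

lemma poolAvg_zero : poolAvg v w 0 = v := by
  simp [poolAvg]

lemma succ_mul_poolAvg (s : ℕ) : ((s : ℝ) + 1) * poolAvg v w s = v + ∑ ℓ ∈ Icc 1 s, w ℓ := by
  rw [poolAvg]
  field_simp

lemma sub_add_sum_sub_eq_mul_sub_poolAvg (θ : ℝ) (s : ℕ) :
    θ - v + ∑ ℓ ∈ Icc 1 s, (θ - w ℓ) = ((s : ℝ) + 1) * (θ - poolAvg v w s) := by
  rw [sum_sub_distrib, sum_const, Nat.card_Icc, nsmul_eq_mul, mul_sub, succ_mul_poolAvg]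
  push_cast
  ring

lemma succ_mul_poolAvg_succ (s : ℕ) :
    ((s : ℝ) + 2) * poolAvg v w (s + 1) = ((s : ℝ) + 1) * poolAvg v w s + w (s + 1) := by
  have h := succ_mul_poolAvg (v := v) (w := w) (s + 1)
  rw [sum_Icc_succ_top (by omega), ← add_assoc, ← succ_mul_poolAvg] at h
  push_cast at h
  linarith

lemma poolAvg_le_poolAvg_succ_iff (s : ℕ) :
    poolAvg v w s ≤ poolAvg v w (s + 1) ↔ poolAvg v w (s + 1) ≤ w (s + 1) := by
  have h := succ_mul_poolAvg_succ (v := v) (w := w) s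
  have hs : (0 : ℝ) ≤ s := s.cast_nonneg
  constructor <;> intro h' <;> nlinarith

lemma monotoneOn_poolAvg {t : ℕ} (h : ∀ s, 1 ≤ s → s ≤ t → poolAvg v w s ≤ w s) :
    MonotoneOn (poolAvg v w) (Set.Iic t) :=
  monotoneOn_of_le_succ Set.ordConnected_Iic fun s _ _ hs =>
    (poolAvg_le_poolAvg_succ_iff s).2 (h (s + 1) (by omega) hs)

lemma le_poolAvg_of_cut {N b t : ℕ} (hw : AntitoneOn w (Set.Icc 1 N))
    (hvb : ∀ ℓ ∈ Icc 1 N, b < ℓ → w ℓ ≤ v) (hhead : ∀ s, 1 ≤ s → s ≤ t → poolAvg v w s ≤ w s)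
    (hcut : t < b → w (t + 1) < poolAvg v w (t + 1)) {ℓ : ℕ} (hℓ : ℓ ∈ Icc 1 N) (htℓ : t < ℓ) :
    w ℓ ≤ poolAvg v w t := by
  by_cases hbℓ : b < ℓ
  · calc w ℓ ≤ v := hvb ℓ hℓ hbℓ
      _ = poolAvg v w 0 := poolAvg_zero.symm
      _ ≤ poolAvg v w t := monotoneOn_poolAvg hhead (Nat.zero_le t) Set.self_mem_Iic (Nat.zero_le t)
  · rw [mem_Icc] at hℓ
    have hlt := hcut (by omega)
    have hdrop : poolAvg v w (t + 1) < poolAvg v w t :=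
      lt_of_not_ge fun h => hlt.not_ge ((poolAvg_le_poolAvg_succ_iff t).1 h)
    calc w ℓ ≤ w (t + 1) := hw ⟨by omega, by omega⟩ ⟨by omega, hℓ.2⟩ htℓ
      _ ≤ poolAvg v w (t + 1) := hlt.le
      _ ≤ poolAvg v w t := hdrop.le

lemma le_of_card_filter_lt {N ℓ : ℕ} (hw : AntitoneOn w (Set.Icc 1 N))
    (hℓ : ℓ ∈ Icc 1 N) (hcard : ((Icc 1 N).filter fun k => v < w k).card < ℓ) : w ℓ ≤ v := by
  by_contra! hv
  have hsub : Icc 1 ℓ ⊆ (Icc 1 N).filter fun k => v < w k := fun k hk => by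
    rw [mem_Icc] at hk hℓ
    exact mem_filter.2 ⟨mem_Icc.2 ⟨hk.1, hk.2.trans hℓ.2⟩,
      hv.trans_le (hw ⟨hk.1, hk.2.trans hℓ.2⟩ ⟨hℓ.1, hℓ.2⟩ hk.2)⟩
  have := card_le_card hsub
  rw [Nat.card_Icc] at this
  omega

lemma sub_add_sum_min_nonneg {θ : ℝ} : ∀ {t : ℕ}, AntitoneOn w (Set.Icc 1 t) →
    (∀ s ≤ t, poolAvg v w s ≤ θ) → 0 ≤ θ - v + ∑ ℓ ∈ Icc 1 t, min (θ - w ℓ) 0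
  | 0, _, hθ => by simpa [poolAvg_zero] using hθ 0 le_rfl
  | t + 1, hw, hθ => by
    by_cases hwt : w (t + 1) ≤ θ
    · rw [sum_Icc_succ_top (by omega), min_eq_right (by linarith), add_zero]
      exact sub_add_sum_min_nonneg (hw.mono (Set.Icc_subset_Icc_right (by omega)))
        fun s hs => hθ s (by omega)
    · have hmin : ∀ ℓ ∈ Icc 1 (t + 1), min (θ - w ℓ) 0 = θ - w ℓ := fun ℓ hℓ => by
        have := hw (Set.mem_Icc.2 (mem_Icc.1 hℓ)) ⟨by omega, le_rfl⟩ (mem_Icc.1 hℓ).2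
        exact min_eq_left (by linarith)
      rw [sum_congr rfl hmin, sub_add_sum_sub_eq_mul_sub_poolAvg]
      exact mul_nonneg (by positivity) (sub_nonneg.2 (hθ _ le_rfl))

lemma pool_head_inner_nonneg {θ y : ℝ} {Z : ℕ → ℝ} {t : ℕ} (hw : AntitoneOn w (Set.Icc 1 t))
    (hτθ : ∀ s ≤ t, poolAvg v w s ≤ θ) (hθ : θ * (θ - poolAvg v w t) = 0)
    (hy : 0 ≤ y) (hZ : ∀ ℓ ∈ Icc 1 t, 0 ≤ Z ℓ ∧ Z ℓ ≤ y) :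
    0 ≤ (θ - v) * (y - θ) + ∑ ℓ ∈ Icc 1 t, (θ - w ℓ) * (Z ℓ - θ) := by
  have hterm : ∑ ℓ ∈ Icc 1 t, (min (θ - w ℓ) 0 * y - (θ - w ℓ) * θ) ≤
      ∑ ℓ ∈ Icc 1 t, (θ - w ℓ) * (Z ℓ - θ) :=
    sum_le_sum fun ℓ hℓ => by
      rw [mul_sub]
      linarith [min_zero_mul_le_mul (a := θ - w ℓ) (hZ ℓ hℓ).1 (hZ ℓ hℓ).2]
  rw [sum_sub_distrib, ← sum_mul, ← sum_mul] at hterm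
  have hA := mul_nonneg hy (sub_add_sum_min_nonneg hw hτθ)
  have hB : θ * (θ - v + ∑ ℓ ∈ Icc 1 t, (θ - w ℓ)) = 0 := by
    rw [sub_add_sum_sub_eq_mul_sub_poolAvg, mul_left_comm, hθ, mul_zero]
  linarith

lemma pool_inner_nonneg {θ y : ℝ} {x Z : ℕ → ℝ} {N t : ℕ} (hw : AntitoneOn w (Set.Icc 1 t))
    (htN : t ≤ N) (hτθ : ∀ s ≤ t, poolAvg v w s ≤ θ) (hθ : θ * (θ - poolAvg v w t) = 0)
    (hx1 : ∀ ℓ ∈ Icc 1 N, ℓ ≤ t → x ℓ = θ) (hx2 : ∀ ℓ ∈ Icc 1 N, t < ℓ → x ℓ = max (w ℓ) 0)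
    (hy : 0 ≤ y) (hZ : ∀ ℓ ∈ Icc 1 N, 0 ≤ Z ℓ ∧ Z ℓ ≤ y) :
    0 ≤ (θ - v) * (y - θ) + ∑ ℓ ∈ Icc 1 N, (x ℓ - w ℓ) * (Z ℓ - x ℓ) := by
  have hIcc : ∀ M, Icc 1 M = Ioc 0 M := Icc_add_one_left_eq_Ioc 0
  rw [hIcc, ← sum_Ioc_consecutive _ (Nat.zero_le t) htN, ← hIcc, ← add_assoc]
  have hsub : Icc 1 t ⊆ Icc 1 N := Icc_subset_Icc_right htN
  have hhead : ∑ ℓ ∈ Icc 1 t, (x ℓ - w ℓ) * (Z ℓ - x ℓ) = ∑ ℓ ∈ Icc 1 t, (θ - w ℓ) * (Z ℓ - θ) :=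
    sum_congr rfl fun ℓ hℓ => by rw [hx1 ℓ (hsub hℓ) (mem_Icc.1 hℓ).2]
  refine add_nonneg ?_ (sum_nonneg fun ℓ hℓ => ?_)
  · rw [hhead]
    exact pool_head_inner_nonneg hw hτθ hθ hy fun ℓ hℓ => hZ ℓ (hsub hℓ)
  · have hℓ' : ℓ ∈ Icc 1 N := by rw [mem_Ioc] at hℓ; exact mem_Icc.2 ⟨by omega, hℓ.2⟩
    rw [hx2 ℓ hℓ' (mem_Ioc.1 hℓ).1]
    exact max_zero_sub_mul_sub_max_zero_nonneg (hZ ℓ hℓ').1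

end PoolAvg

lemma Matrix.nonneg_and_le_of_enum {ι : Type*} {m n : ℕ} {A : Matrix (Fin m) (Fin n) ℝ}
    {i : Fin m} {j : Fin n} {e : ι → Fin m × Fin n} {s : Finset ι}
    (he : ∀ x : Fin m × Fin n, x ≠ (i, j) → ∃ ℓ ∈ s, e ℓ = x) (hij : 0 ≤ A i j)
    (hA : ∀ ℓ ∈ s, 0 ≤ A (e ℓ).1 (e ℓ).2 ∧ A (e ℓ).1 (e ℓ).2 ≤ A i j) :
    (∀ p q, 0 ≤ A p q) ∧ ∀ p q, (p, q) ≠ (i, j) → A p q ≤ A i j := by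
  have hoff : ∀ x : Fin m × Fin n, x ≠ (i, j) → 0 ≤ A x.1 x.2 ∧ A x.1 x.2 ≤ A i j := by
    intro x hx
    obtain ⟨ℓ, hℓ, rfl⟩ := he x hx
    exact hA ℓ hℓ
  refine ⟨fun p q => ?_, fun p q hpq => (hoff (p, q) hpq).2⟩
  by_cases hpq : (p, q) = (i, j)
  · obtain ⟨rfl, rfl⟩ := Prod.mk.inj hpq
    exact hij
  · exact (hoff (p, q) hpq).1

theorem ePAVA_single_constraint_projection_general
    (m n : ℕ)
    (i : Fin m) (j : Fin n)
    (X : Matrix (Fin m) (Fin n) ℝ)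
    (e : ℕ → Fin m × Fin n)
    (he1 : ∀ ℓ ∈ Finset.Icc 1 (m * n - 1), e ℓ ≠ (i, j))
    (he2 : ∀ ℓ ∈ Finset.Icc 1 (m * n - 1), ∀ ℓ' ∈ Finset.Icc 1 (m * n - 1),
      e ℓ = e ℓ' → ℓ = ℓ')
    (he3 : ∀ pq : Fin m × Fin n, pq ≠ (i, j) → ∃ ℓ ∈ Finset.Icc 1 (m * n - 1), e ℓ = pq)
    (w : ℕ → ℝ) (hw : ∀ ℓ, w ℓ = X (e ℓ).1 (e ℓ).2)
    (hmono : ∀ ℓ ℓ', 1 ≤ ℓ → ℓ ≤ ℓ' → ℓ' ≤ m * n - 1 → w ℓ' ≤ w ℓ)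
    (v : ℝ) (hv : v = X i j)
    (r : ℕ) (hr : r = 1 + ((Finset.Icc 1 (m * n - 1)).filter (fun ℓ => v < w ℓ)).card)
    (τ : ℕ → ℝ) (hτ : ∀ s, τ s = (v + ∑ ℓ ∈ Finset.Icc 1 s, w ℓ) / (s + 1))
    (S : Set ℕ) (hS : S = {s | 1 ≤ s ∧ s ≤ r - 1 ∧ τ s > w s})
    (t : ℕ)
    (ht1 : S.Nonempty → t = sInf S - 1)
    (ht2 : ¬ S.Nonempty → t = r - 1)
    (Xh : Matrix (Fin m) (Fin n) ℝ)
    (hXhij : Xh i j = max (τ t) 0)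
    (hXh1 : ∀ ℓ ∈ Finset.Icc 1 (m * n - 1), ℓ ≤ t → Xh (e ℓ).1 (e ℓ).2 = max (τ t) 0)
    (hXh2 : ∀ ℓ ∈ Finset.Icc 1 (m * n - 1), t < ℓ → Xh (e ℓ).1 (e ℓ).2 = max (w ℓ) 0) :
    ((∀ p q, 0 ≤ Xh p q) ∧ (∀ p q, (p, q) ≠ (i, j) → Xh p q ≤ Xh i j)) ∧
    ∀ Y : Matrix (Fin m) (Fin n) ℝ,
      (∀ p q, 0 ≤ Y p q) → (∀ p q, (p, q) ≠ (i, j) → Y p q ≤ Y i j) →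
      Real.sqrt (∑ p, ∑ q, (Xh p q - X p q) ^ 2) ≤
        Real.sqrt (∑ p, ∑ q, (Y p q - X p q) ^ 2) := by
  obtain rfl : τ = poolAvg v w := funext hτ
  subst hS
  obtain ⟨htr, hhead, hcut⟩ := Nat.sInf_sub_one_spec ht1 ht2
  simp only [gt_iff_lt, not_lt] at hhead
  have hanti : AntitoneOn w (Set.Icc 1 (m * n - 1)) := fun a ha b hb hab =>
    hmono a b ha.1 hab hb.2
  have htN : t ≤ m * n - 1 := by
    have := card_filter_le (Icc 1 (m * n - 1)) fun ℓ => v < w ℓ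
    rw [Nat.card_Icc] at this
    omega
  have htail : ∀ ℓ ∈ Icc 1 (m * n - 1), t < ℓ → w ℓ ≤ poolAvg v w t := fun ℓ hℓ htℓ =>
    le_poolAvg_of_cut hanti (fun k hk hrk => le_of_card_filter_lt hanti hk (by omega))
      hhead hcut hℓ htℓ
  have hτθ : ∀ s ≤ t, poolAvg v w s ≤ max (poolAvg v w t) 0 := fun s hs =>
    (monotoneOn_poolAvg hhead hs Set.self_mem_Iic hs).trans (le_max_left _ _)
  refine ⟨Matrix.nonneg_and_le_of_enum he3 (hXhij ▸ le_max_right _ _) fun ℓ hℓ => ?_,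
    fun Y hY0 hYij => ?_⟩
  · rw [hXhij]
    rcases le_or_gt ℓ t with h | h
    · rw [hXh1 ℓ hℓ h]
      exact ⟨le_max_right _ _, le_rfl⟩
    · rw [hXh2 ℓ hℓ h]
      exact ⟨le_max_right _ _, max_le_max_right 0 (htail ℓ hℓ h)⟩
  apply Real.sqrt_le_sqrt
  simp only [← Fintype.sum_prod_type']
  refine sum_sq_sub_le_of_sum_mul_nonneg _ ?_
  rw [Fintype.sum_eq_add_sum_of_enum _ he1 he2 he3, hXhij, ← hv]
  simp only [← hw]
  exact pool_inner_nonneg (hanti.mono (Set.Icc_subset_Icc_right htN)) htN hτθ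
    (max_zero_mul_max_zero_sub_self _) hXh1 hXh2 (hY0 i j)
    fun ℓ hℓ => ⟨hY0 _ _, hYij _ _ (by simpa using he1 ℓ hℓ)⟩

/-- **Correctness of ePAVA for a single order constraint (Proposition 3, k = 1).**
With `V = ([m]×[n]) \ {(i,j)}`, `e` an enumeration of `V` sorting `w ℓ = X (e ℓ)`
nonincreasingly, `v = X i j`, rank `r`, pooled averages `τ`, cut index `t`, the
thresholded matrix `X̂` is the Euclidean (Frobenius) projection of `X` onto
`C = {Y : Y ≥ 0 entrywise, Y p q ≤ Y i j for (p,q) ∈ V}`. -/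
theorem ePAVA_single_constraint_projection
    (m n : ℕ) (hm : 1 ≤ m) (hn : 1 ≤ n)
    (i : Fin m) (j : Fin n)
    (X : Matrix (Fin m) (Fin n) ℝ)
    (e : ℕ → Fin m × Fin n)
    (he1 : ∀ ℓ ∈ Finset.Icc 1 (m * n - 1), e ℓ ≠ (i, j))
    (he2 : ∀ ℓ ∈ Finset.Icc 1 (m * n - 1), ∀ ℓ' ∈ Finset.Icc 1 (m * n - 1),
      e ℓ = e ℓ' → ℓ = ℓ')
    (he3 : ∀ pq : Fin m × Fin n, pq ≠ (i, j) → ∃ ℓ ∈ Finset.Icc 1 (m * n - 1), e ℓ = pq)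
    (w : ℕ → ℝ) (hw : ∀ ℓ, w ℓ = X (e ℓ).1 (e ℓ).2)
    (hmono : ∀ ℓ ℓ', 1 ≤ ℓ → ℓ ≤ ℓ' → ℓ' ≤ m * n - 1 → w ℓ' ≤ w ℓ)
    (v : ℝ) (hv : v = X i j)
    (r : ℕ) (hr : r = 1 + ((Finset.Icc 1 (m * n - 1)).filter (fun ℓ => v < w ℓ)).card)
    (τ : ℕ → ℝ) (hτ : ∀ s, τ s = (v + ∑ ℓ ∈ Finset.Icc 1 s, w ℓ) / (s + 1))
    (S : Set ℕ) (hS : S = {s | 1 ≤ s ∧ s ≤ r - 1 ∧ τ s > w s})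
    (t : ℕ)
    (ht1 : S.Nonempty → t = sInf S - 1)
    (ht2 : ¬ S.Nonempty → t = r - 1)
    (Xh : Matrix (Fin m) (Fin n) ℝ)
    (hXhij : Xh i j = max (τ t) 0)
    (hXh1 : ∀ ℓ ∈ Finset.Icc 1 (m * n - 1), ℓ ≤ t → Xh (e ℓ).1 (e ℓ).2 = max (τ t) 0)
    (hXh2 : ∀ ℓ ∈ Finset.Icc 1 (m * n - 1), t < ℓ → Xh (e ℓ).1 (e ℓ).2 = max (w ℓ) 0) :
    ((∀ p q, 0 ≤ Xh p q) ∧ (∀ p q, (p, q) ≠ (i, j) → Xh p q ≤ Xh i j)) ∧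
    ∀ Y : Matrix (Fin m) (Fin n) ℝ,
      (∀ p q, 0 ≤ Y p q) → (∀ p q, (p, q) ≠ (i, j) → Y p q ≤ Y i j) →
      Real.sqrt (∑ p, ∑ q, (Xh p q - X p q) ^ 2) ≤
        Real.sqrt (∑ p, ∑ q, (Y p q - X p q) ^ 2) :=
  ePAVA_single_constraint_projection_general m n i j X e he1 he2 he3 w hw hmono v hv r hr τ hτ S hS
    t ht1 ht2 Xh hXhij hXh1 hXh2
end

section
/- Let N ≥ 0, let w_1 ≥ w_2 ≥ ⋯ ≥ w_N be real numbers, and let v₀ ∈ ℝ. For each η ≥ 0, set v(η) := v₀ − η, r(η) := 1 + #{ℓ : w_ℓ > v(η)}, τ(s, η) := (v(η) + ∑_{ℓ=1}^{s} w_ℓ)/(s+1) for 0 ≤ s ≤ r(η)−1, and t(η) := (min{s : 1 ≤ s ≤ r(η)−1, τ(s,η) > w_s}) − 1 if such s exists, and t(η) := r(η)−1 otherwise. Define T : [0,∞) → ℝ by T(η) := max(τ(t(η), η), 0). Then T is monotone nonincreasing on [0,∞) and convex on [0,∞). -/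
/-!
`poolMean w a s = (a + w 1 + ⋯ + w s) / (s + 1)` is `τ(s, η)` for `a = v(η)`. Adding the next
entry `w (s + 1)` moves the mean towards it, so the mean increases while the next entry lies
above it; once an entry lies below the mean, all later (smaller) entries do too and the mean
decreases from then on. The stopping index `t(η)` is exactly where this switch happens, so
`τ(t(η), η) = max_{s ≤ N} τ(s, η)`. Each `τ(s, ·)` is affine and nonincreasing, so their
maximum, clipped at `0`, is nonincreasing and convex.
-/

open Finset

noncomputable def poolMean (w : ℕ → ℝ) (a : ℝ) (s : ℕ) : ℝ :=
  (a + ∑ ℓ ∈ Icc 1 s, w ℓ) / (s + 1)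

section PoolMean

variable {w : ℕ → ℝ} {a : ℝ}

theorem poolMean_zero : poolMean w a 0 = a := by
  simp [poolMean]

theorem poolMean_succ (s : ℕ) :
    ((s : ℝ) + 2) * poolMean w a (s + 1) = ((s : ℝ) + 1) * poolMean w a s + w (s + 1) := by
  have : (s : ℝ) + 1 ≠ 0 := by positivity
  simp only [poolMean, sum_Icc_succ_top (Nat.le_add_left 1 s)]
  push_cast
  field_simp
  ring

theorem poolMean_succ_le_iff (s : ℕ) :
    poolMean w a (s + 1) ≤ poolMean w a s ↔ w (s + 1) ≤ poolMean w a s := by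
  have := poolMean_succ (w := w) (a := a) s
  have := s.cast_nonneg (α := ℝ)
  constructor <;> intro <;> nlinarith

theorem poolMean_le_poolMean_succ_iff (s : ℕ) :
    poolMean w a s ≤ poolMean w a (s + 1) ↔ poolMean w a s ≤ w (s + 1) := by
  have := poolMean_succ (w := w) (a := a) s
  have := s.cast_nonneg (α := ℝ)
  constructor <;> intro <;> nlinarith

theorem poolMean_succ_le_apply_iff (s : ℕ) :
    poolMean w a (s + 1) ≤ w (s + 1) ↔ poolMean w a s ≤ w (s + 1) := by
  have := poolMean_succ (w := w) (a := a) s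
  have := s.cast_nonneg (α := ℝ)
  constructor <;> intro <;> nlinarith

theorem apply_le_poolMean_succ_iff (s : ℕ) :
    w (s + 1) ≤ poolMean w a (s + 1) ↔ w (s + 1) ≤ poolMean w a s := by
  have := poolMean_succ (w := w) (a := a) s
  have := s.cast_nonneg (α := ℝ)
  constructor <;> intro <;> nlinarith

theorem poolMean_le_of_le_apply {t : ℕ} (h : ∀ s, 1 ≤ s → s ≤ t → poolMean w a s ≤ w s)
    {s : ℕ} (hst : s ≤ t) : poolMean w a s ≤ poolMean w a t := by
  induction hst using Nat.decreasingInduction with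
  | self => exact le_rfl
  | of_succ s hs ih =>
    have hstep := (poolMean_succ_le_apply_iff s).1 (h (s + 1) (Nat.le_add_left 1 s) hs)
    exact ((poolMean_le_poolMean_succ_iff s).2 hstep).trans ih

theorem apply_succ_le_poolMean_of_le {N t : ℕ} (hw : AntitoneOn w (Set.Icc 1 N))
    (ht : w (t + 1) ≤ poolMean w a t) {s : ℕ} (hts : t ≤ s) (hsN : s < N) :
    w (s + 1) ≤ poolMean w a s := by
  induction s, hts using Nat.le_induction with
  | base => exact ht
  | succ s _ ih =>
    have hmean := (apply_le_poolMean_succ_iff s).2 (ih (by omega))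
    exact (hw ⟨by omega, by omega⟩ ⟨by omega, by omega⟩ (Nat.le_succ _)).trans hmean

theorem poolMean_le_of_apply_succ_le {N t : ℕ} (hw : AntitoneOn w (Set.Icc 1 N))
    (ht : t < N → w (t + 1) ≤ poolMean w a t) {s : ℕ} (hts : t ≤ s) (hsN : s ≤ N) :
    poolMean w a s ≤ poolMean w a t := by
  induction s, hts using Nat.le_induction with
  | base => exact le_rfl
  | succ s hts ih =>
    have hnext := apply_succ_le_poolMean_of_le hw (ht (by omega)) hts (by omega)
    exact ((poolMean_succ_le_iff s).2 hnext).trans (ih (by omega))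

theorem isMaxOn_poolMean {N t : ℕ} (hw : AntitoneOn w (Set.Icc 1 N))
    (hbefore : ∀ s, 1 ≤ s → s ≤ t → poolMean w a s ≤ w s)
    (hafter : t < N → w (t + 1) ≤ poolMean w a t) :
    IsMaxOn (poolMean w a) (Set.Iic N) t :=
  isMaxOn_iff.2 fun s hsN => (le_total s t).elim (poolMean_le_of_le_apply hbefore)
    fun hts => poolMean_le_of_apply_succ_le hw hafter hts hsN

theorem apply_card_succ_le {N : ℕ} (hw : AntitoneOn w (Set.Icc 1 N))
    (h : #{ℓ ∈ Icc 1 N | a < w ℓ} < N) : w (#{ℓ ∈ Icc 1 N | a < w ℓ} + 1) ≤ a := by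
  set k := #{ℓ ∈ Icc 1 N | a < w ℓ}
  by_contra! hlt
  have hsub : Icc 1 (k + 1) ⊆ {ℓ ∈ Icc 1 N | a < w ℓ} := fun ℓ hℓ => by
    rw [mem_Icc] at hℓ
    rw [mem_filter, mem_Icc]
    exact ⟨⟨hℓ.1, by omega⟩, hlt.trans_le (hw ⟨hℓ.1, by omega⟩ ⟨by omega, by omega⟩ hℓ.2)⟩
  have := card_le_card hsub
  simp only [Nat.card_Icc, add_tsub_cancel_right] at this
  omega

theorem isMaxOn_poolMean_stop {N : ℕ} (hw : AntitoneOn w (Set.Icc 1 N)) {r : ℕ}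
    (hr : r = 1 + #{ℓ ∈ Icc 1 N | a < w ℓ}) {S : Set ℕ}
    (hS : S = {s | 1 ≤ s ∧ s ≤ r - 1 ∧ poolMean w a s > w s}) {t : ℕ}
    (ht₁ : S.Nonempty → t = sInf S - 1) (ht₂ : ¬S.Nonempty → t = r - 1) :
    t ≤ N ∧ IsMaxOn (poolMean w a) (Set.Iic N) t := by
  have hrN : r - 1 ≤ N := by
    have := card_filter_le (Icc 1 N) (a < w ·)
    rw [Nat.card_Icc] at this
    omega
  have hbefore (hnot : ∀ s, 1 ≤ s → s ≤ t → s ∉ S) (htr : t ≤ r - 1) :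
      ∀ s, 1 ≤ s → s ≤ t → poolMean w a s ≤ w s := fun s h1 hst => by
    have hs := hnot s h1 hst
    rw [hS] at hs
    simp only [Set.mem_ofPred_eq, not_and, not_lt] at hs
    exact hs h1 (hst.trans htr)
  by_cases hne : S.Nonempty
  · set m := sInf S
    have hm : m ∈ S := Nat.sInf_mem hne
    rw [hS] at hm
    obtain ⟨hm₁, hmr, hmw⟩ := hm
    have ht := ht₁ hne
    have hbefore := hbefore (fun s _ hst => Nat.notMem_of_lt_sInf (by omega)) (by omega)
    refine ⟨by omega, isMaxOn_poolMean hw hbefore fun _ => ?_⟩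
    rw [show m = t + 1 by omega] at hmw
    exact (apply_le_poolMean_succ_iff t).1 hmw.le
  · have ht := ht₂ hne
    have hbefore := hbefore (fun s _ _ hs => hne ⟨s, hs⟩) ht.le
    refine ⟨by omega, isMaxOn_poolMean hw hbefore fun htN => ?_⟩
    calc w (t + 1) ≤ a := by
          rw [show t + 1 = #{ℓ ∈ Icc 1 N | a < w ℓ} + 1 by omega]
          exact apply_card_succ_le hw (by omega)
      _ = poolMean w a 0 := poolMean_zero.symm
      _ ≤ poolMean w a t := poolMean_le_of_le_apply hbefore t.zero_le

theorem antitone_poolMean_sub (c : ℝ) (s : ℕ) : Antitone fun η => poolMean w (c - η) s :=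
  fun x y hxy => by simp only [poolMean]; gcongr

theorem convexOn_poolMean_sub (c : ℝ) (s : ℕ) :
    ConvexOn ℝ Set.univ fun η => poolMean w (c - η) s := by
  refine ⟨convex_univ, fun x _ y _ a b _ _ hab => le_of_eq ?_⟩
  have : (s : ℝ) + 1 ≠ 0 := by positivity
  simp only [poolMean, smul_eq_mul]
  field_simp
  linear_combination -(c + ∑ ℓ ∈ Icc 1 s, w ℓ) * hab

end PoolMean

section Argmax

variable {ι α β : Type*} {f : ι → α → β} {I : Set ι} {t : α → ι} {D : Set α}

theorem antitoneOn_apply_argmax [Preorder α] [Preorder β] (ht : ∀ x, t x ∈ I)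
    (hmax : ∀ x, IsMaxOn (f · x) I (t x)) (hf : ∀ i ∈ I, AntitoneOn (f i) D) :
    AntitoneOn (fun x => f (t x) x) D :=
  fun x hx y hy hxy => (hf _ (ht y) hx hy hxy).trans (isMaxOn_iff.1 (hmax x) _ (ht y))

theorem convexOn_apply_argmax {𝕜 : Type*} [Semiring 𝕜] [PartialOrder 𝕜] [AddCommMonoid α]
    [SMul 𝕜 α] [AddCommMonoid β] [PartialOrder β] [IsOrderedAddMonoid β] [Module 𝕜 β]
    [PosSMulMono 𝕜 β] (hD : Convex 𝕜 D) (ht : ∀ x, t x ∈ I)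
    (hmax : ∀ x, IsMaxOn (f · x) I (t x)) (hf : ∀ i ∈ I, ConvexOn 𝕜 D (f i)) :
    ConvexOn 𝕜 D (fun x => f (t x) x) := by
  refine ⟨hD, fun x hx y hy a b ha hb hab => ?_⟩
  have hx' := isMaxOn_iff.1 (hmax x) _ (ht (a • x + b • y))
  have hy' := isMaxOn_iff.1 (hmax y) _ (ht (a • x + b • y))
  calc f (t (a • x + b • y)) (a • x + b • y)
      ≤ a • f (t (a • x + b • y)) x + b • f (t (a • x + b • y)) y :=
        (hf _ (ht _)).2 hx hy ha hb hab
    _ ≤ a • f (t x) x + b • f (t y) y :=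
        add_le_add (smul_le_smul_of_nonneg_left hx' ha) (smul_le_smul_of_nonneg_left hy' hb)

end Argmax
/-- **The clipped pooling threshold function is nonincreasing and convex
(Lemma on `T(η)` for ePAVA).** For a nonincreasing sequence `w 1 ≥ ⋯ ≥ w N`
and distinguished value `v₀`, the function `T η = max (τ (t η) η) 0`, obtained by
pooling `v₀ - η` with the top `t η` values, is antitone and convex on `[0, ∞)`. -/
theorem pooling_threshold_function_antitone_convex
    (N : ℕ) (w : ℕ → ℝ)
    (hw : ∀ ℓ ℓ', 1 ≤ ℓ → ℓ ≤ ℓ' → ℓ' ≤ N → w ℓ' ≤ w ℓ)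
    (v₀ : ℝ)
    (v : ℝ → ℝ) (hv : ∀ η, v η = v₀ - η)
    (r : ℝ → ℕ)
    (hr : ∀ η, r η = 1 + ((Finset.Icc 1 N).filter (fun ℓ => v η < w ℓ)).card)
    (τ : ℕ → ℝ → ℝ)
    (hτ : ∀ s η, τ s η = (v η + ∑ ℓ ∈ Finset.Icc 1 s, w ℓ) / (s + 1))
    (S : ℝ → Set ℕ)
    (hS : ∀ η, S η = {s | 1 ≤ s ∧ s ≤ r η - 1 ∧ τ s η > w s})
    (t : ℝ → ℕ)
    (ht1 : ∀ η, (S η).Nonempty → t η = sInf (S η) - 1)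
    (ht2 : ∀ η, ¬ (S η).Nonempty → t η = r η - 1)
    (T : ℝ → ℝ) (hT : ∀ η, T η = max (τ (t η) η) 0) :
    AntitoneOn T (Set.Ici 0) ∧ ConvexOn ℝ (Set.Ici 0) T := by
  have hw' : AntitoneOn w (Set.Icc 1 N) := fun ℓ hℓ ℓ' hℓ' h => hw ℓ ℓ' hℓ.1 h hℓ'.2
  obtain rfl : v = fun η => v₀ - η := funext hv
  obtain rfl : τ = fun s η => poolMean w (v₀ - η) s := funext fun s => funext (hτ s)
  obtain rfl : T = fun η => max (poolMean w (v₀ - η) (t η)) 0 := funext hT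
  have hstop η := isMaxOn_poolMean_stop hw' (hr η) (hS η) (ht1 η) (ht2 η)
  have htN η : t η ∈ Set.Iic N := (hstop η).1
  have hmax η : IsMaxOn (fun s => poolMean w (v₀ - η) s) (Set.Iic N) (t η) := (hstop η).2
  exact ⟨(antitoneOn_apply_argmax htN hmax fun s _ =>
      (antitone_poolMean_sub v₀ s).antitoneOn _).max antitoneOn_const,
    (convexOn_apply_argmax (convex_Ici 0) htN hmax fun s _ =>
      (convexOn_poolMean_sub v₀ s).subset (Set.subset_univ _) (convex_Ici 0)).sup
      (convexOn_const 0 (convex_Ici 0))⟩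
end

section
/- Let n ≥ 2, let 0 ≤ φ_1 ≤ φ_2 ≤ ⋯ ≤ φ_{n−1} be nonnegative real numbers, and fix α with 0 < α ≤ 1. Define G : (α/n, α] → ℝ by G(u) := minimum of ∑_{k=1}^{n−1} φ_k x_k over x ∈ ℝ^{n−1} subject to ∑_{k=1}^{n−1} x_k = α − u and 0 ≤ x_k ≤ u for all k. Then G is monotone nonincreasing on (α/n, α] and convex on (α/n, α]. -/
/-!
The graph `{(B, u, y) | y is the cost of a point with budget B and capacity u}` of the packing LP
is a convex cone: feasible points can be added and scaled by nonnegative factors. Convexity of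
`G` follows at once. For monotonicity, scaling an optimal point for capacity `u` by
`(α - v) / (α - u) ∈ [0, 1]` gives a feasible point for `v ≥ u` whose cost is no larger, since the
costs are nonnegative.
-/

open Finset

section PackingValues

variable {ι : Type*} {s : Finset ι} {c : ι → ℝ}

variable (s c) in
def packingValues (B u : ℝ) : Set ℝ :=
  {y | ∃ x : ι → ℝ, (∑ k ∈ s, x k = B) ∧ (∀ k ∈ s, 0 ≤ x k ∧ x k ≤ u) ∧
    y = ∑ k ∈ s, c k * x k}

theorem add_mem_packingValues {B₁ B₂ u₁ u₂ y₁ y₂ : ℝ} (h₁ : y₁ ∈ packingValues s c B₁ u₁)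
    (h₂ : y₂ ∈ packingValues s c B₂ u₂) : y₁ + y₂ ∈ packingValues s c (B₁ + B₂) (u₁ + u₂) := by
  obtain ⟨x₁, hsum₁, hbd₁, rfl⟩ := h₁
  obtain ⟨x₂, hsum₂, hbd₂, rfl⟩ := h₂
  refine ⟨x₁ + x₂, by simp [sum_add_distrib, hsum₁, hsum₂], fun k hk => ?_,
    by simp [mul_add, sum_add_distrib]⟩
  obtain ⟨h₁0, h₁u⟩ := hbd₁ k hk
  obtain ⟨h₂0, h₂u⟩ := hbd₂ k hk
  exact ⟨by simp only [Pi.add_apply]; linarith, by simp only [Pi.add_apply]; linarith⟩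

theorem mul_mem_packingValues {t B u y : ℝ} (ht : 0 ≤ t) (h : y ∈ packingValues s c B u) :
    t * y ∈ packingValues s c (t * B) (t * u) := by
  obtain ⟨x, hsum, hbd, rfl⟩ := h
  refine ⟨t • x, by simp [← mul_sum, hsum], fun k hk => ?_, by simp [mul_sum, mul_left_comm]⟩
  obtain ⟨hx0, hxu⟩ := hbd k hk
  exact ⟨mul_nonneg ht hx0, mul_le_mul_of_nonneg_left hxu ht⟩

theorem packingValues_mono {B u v : ℝ} (huv : u ≤ v) :
    packingValues s c B u ⊆ packingValues s c B v := by
  rintro y ⟨x, hsum, hbd, rfl⟩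
  exact ⟨x, hsum, fun k hk => ⟨(hbd k hk).1, (hbd k hk).2.trans huv⟩, rfl⟩

theorem nonneg_of_mem_packingValues (hc : ∀ k ∈ s, 0 ≤ c k) {B u y : ℝ}
    (h : y ∈ packingValues s c B u) : 0 ≤ y := by
  obtain ⟨x, -, hbd, rfl⟩ := h
  exact sum_nonneg fun k hk => mul_nonneg (hc k hk) (hbd k hk).1

variable {I : Set ℝ} {α : ℝ} {G : ℝ → ℝ}

theorem convexOn_of_isLeast_packingValues (hI : Convex ℝ I)
    (hG : ∀ u ∈ I, IsLeast (packingValues s c (α - u) u) (G u)) : ConvexOn ℝ I G := by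
  refine ⟨hI, fun u hu v hv a b ha hb hab => ?_⟩
  have hcomb := add_mem_packingValues (mul_mem_packingValues ha (hG u hu).1)
    (mul_mem_packingValues hb (hG v hv).1)
  have hbudget : a * (α - u) + b * (α - v) = α - (a * u + b * v) := by
    linear_combination α * hab
  rw [hbudget] at hcomb
  exact (hG _ (hI hu hv ha hb hab)).2 hcomb

theorem antitoneOn_of_isLeast_packingValues (hc : ∀ k ∈ s, 0 ≤ c k) (hI : I ⊆ Set.Icc 0 α)
    (hG : ∀ u ∈ I, IsLeast (packingValues s c (α - u) u) (G u)) : AntitoneOn G I := by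
  intro u hu v hv huv
  obtain ⟨hu0, huα⟩ := hI hu
  obtain hαu | hlt := huα.eq_or_lt
  · rw [le_antisymm ((hI hv).2.trans hαu.symm.le) huv]
  set t := (α - v) / (α - u)
  have ht0 : 0 ≤ t := div_nonneg (by linarith [(hI hv).2]) (by linarith)
  have ht1 : t ≤ 1 := (div_le_one (by linarith)).2 (by linarith)
  have hscaled := mul_mem_packingValues ht0 (hG u hu).1
  rw [div_mul_cancel₀ _ (sub_ne_zero.2 hlt.ne')] at hscaled
  have hcap : t * u ≤ v := (mul_le_of_le_one_left hu0 ht1).trans huv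
  calc G v ≤ t * G u := (hG v hv).2 (packingValues_mono hcap hscaled)
    _ ≤ G u := mul_le_of_le_one_left (nonneg_of_mem_packingValues hc (hG u hu).1) ht1

end PackingValues

theorem packing_LP_reduced_value_antitone_convex_general
    (n : ℕ)
    (φ : ℕ → ℝ)
    (hφ0 : ∀ k, 1 ≤ k → k ≤ n - 1 → 0 ≤ φ k)
    (α : ℝ) (hα0 : 0 < α)
    (G : ℝ → ℝ)
    (hG : ∀ u ∈ Set.Ioc (α / n) α,
      IsLeast {y : ℝ | ∃ x : ℕ → ℝ,
        (∑ k ∈ Finset.Icc 1 (n - 1), x k = α - u) ∧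
        (∀ k ∈ Finset.Icc 1 (n - 1), 0 ≤ x k ∧ x k ≤ u) ∧
        y = ∑ k ∈ Finset.Icc 1 (n - 1), φ k * x k} (G u)) :
    AntitoneOn G (Set.Ioc (α / n) α) ∧ ConvexOn ℝ (Set.Ioc (α / n) α) G := by
  have hG' : ∀ u ∈ Set.Ioc (α / n) α,
      IsLeast (packingValues (Icc 1 (n - 1)) φ (α - u) u) (G u) := hG
  have hφ0' : ∀ k ∈ Icc 1 (n - 1), 0 ≤ φ k := fun k hk =>
    hφ0 k (mem_Icc.1 hk).1 (mem_Icc.1 hk).2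
  have hsub : Set.Ioc (α / n) α ⊆ Set.Icc 0 α := fun u hu =>
    ⟨(div_nonneg hα0.le n.cast_nonneg).trans hu.1.le, hu.2⟩
  exact ⟨antitoneOn_of_isLeast_packingValues hφ0' hsub hG',
    convexOn_of_isLeast_packingValues (convex_Ioc _ _) hG'⟩

/-- **Monotonicity and convexity of the reduced PACKING value function (Lemma 6).**
For nonnegative nondecreasing costs `0 ≤ φ 1 ≤ ⋯ ≤ φ (n-1)` and fixed budget
`0 < α ≤ 1`, the value function `G u` of minimizing `∑_{k=1}^{n-1} φ k * x k`
subject to `∑ x k = α - u`, `0 ≤ x k ≤ u`, is antitone and convex on `(α/n, α]`. -/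
theorem packing_LP_reduced_value_antitone_convex
    (n : ℕ) (hn : 2 ≤ n)
    (φ : ℕ → ℝ)
    (hφ0 : ∀ k, 1 ≤ k → k ≤ n - 1 → 0 ≤ φ k)
    (hφ : ∀ k k', 1 ≤ k → k ≤ k' → k' ≤ n - 1 → φ k ≤ φ k')
    (α : ℝ) (hα0 : 0 < α) (hα1 : α ≤ 1)
    (G : ℝ → ℝ)
    (hG : ∀ u ∈ Set.Ioc (α / n) α,
      IsLeast {y : ℝ | ∃ x : ℕ → ℝ,
        (∑ k ∈ Finset.Icc 1 (n - 1), x k = α - u) ∧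
        (∀ k ∈ Finset.Icc 1 (n - 1), 0 ≤ x k ∧ x k ≤ u) ∧
        y = ∑ k ∈ Finset.Icc 1 (n - 1), φ k * x k} (G u)) :
    AntitoneOn G (Set.Ioc (α / n) α) ∧ ConvexOn ℝ (Set.Ioc (α / n) α) G :=
  packing_LP_reduced_value_antitone_convex_general n φ hφ0 α hα0 G hG
end

section
/- Let m, n ≥ 1, let D ∈ ℝ^{m×n}, let a ∈ ℝ^m and b ∈ ℝ^n be probability vectors, let C₁ := {X ∈ ℝ^{m×n} : X 1_n = a, X^T 1_m = b}, and let C₂ ⊆ ℝ^{m×n} be a nonempty closed convex set with C₁ ∩ C₂ ≠ ∅. Write f(X) := tr(D^T X), and let ⟨A,B⟩ := tr(A^T B) denote the Frobenius inner product and ‖·‖_F the Frobenius norm. Let ρ > 0 and let sequences X_t, Z_t, M_t ∈ ℝ^{m×n} (t ≥ 0) satisfy, for every t ≥ 0: X_{t+1} ∈ C₁ and f(X_{t+1}) + (ρ/2)‖X_{t+1} − Z_t + M_t‖_F² ≤ f(X) + (ρ/2)‖X − Z_t + M_t‖_F² for all X ∈ C₁; Z_{t+1} ∈ C₂ and ‖X_{t+1}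 − Z_{t+1} + M_t‖_F ≤ ‖X_{t+1} − Z + M_t‖_F for all Z ∈ C₂; and M_{t+1} = M_t + X_{t+1} − Z_{t+1}. Suppose Π* ∈ C₁ ∩ C₂ satisfies f(Π*) ≤ f(X) for all X ∈ C₁ ∩ C₂, set f* := f(Π*), and suppose Y* ∈ ℝ^{m×n} satisfies f* ≤ f(X) + ⟨Y*, X − Z⟩ for all X ∈ C₁ and Z ∈ C₂. Let c₂ > 0 with c₂ ≥ 2‖Y*‖_F and c₁ ≥ ‖Z₀ − Π*‖_F² + (‖M₀‖_F + c₂/ρ)². Then for every t ≥ 0, the averages X̄_t := (1/(t+1)) ∑_{ℓ=1}^{t+1} X_ℓ and Z̄_t := (1/(t+1)) ∑_{ℓ=1}^{t+1} Z_ℓ satisfy f(X̄_t) − f* ≤ ρ c₁ / (2(t+1)) and ‖X̄_t − Z̄_t‖_F ≤ ρ c₁ / (c₂ (t+1)). -/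
/-! Because the cost `⟪d, ·⟫` is linear, both ADMM updates are metric projections onto convex
sets: the `x`-update projects `z_t - μ_t - ρ⁻¹ d` onto `C₁`, the `z`-update projects
`x_{t+1} + μ_t` onto `C₂`. Testing their variational inequalities at the feasible point `p = Π*`
shows that the energy `‖z_t - p‖² + ‖μ_t - q‖²` drops by at least `2/ρ` times the Lagrangian gap
`⟪d, x_{t+1} - p⟫ + ρ ⟪q, x_{t+1} - z_{t+1}⟫`, for every `q`. Telescoping bounds the gap of the
averages by `ρ/(2(t+1))` times the initial energy, uniformly over `‖ρ q‖ ≤ c₂`. The choice `q = 0`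
gives the objective bound; `ρ q` of norm `c₂` along `x̄_t - z̄_t`, together with the lower bound
`f* - f(x̄_t) ≤ ⟪Y*, x̄_t - z̄_t⟫` from the dual certificate, gives the feasibility bound.
Matrices with the Frobenius norm are handled through their isometry with
`EuclideanSpace ℝ (Fin m × Fin n)`. -/

open Matrix

noncomputable def frob {m n : ℕ} (A : Matrix (Fin m) (Fin n) ℝ) : ℝ :=
  Real.sqrt (∑ p, ∑ q, (A p q) ^ 2)

open Finset RealInnerProductSpace

section InnerProductSpace

variable {E : Type*} [NormedAddCommGroup E] [InnerProductSpace ℝ E]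

theorem real_inner_sub_le_zero_of_isMinOn {K : Set E} (hK : Convex ℝ K) {u v : E} (hv : v ∈ K)
    (hmin : IsMinOn (fun w => ‖u - w‖) K v) {w : E} (hw : w ∈ K) : ⟪u - v, w - v⟫ ≤ 0 := by
  have : Nonempty K := ⟨⟨v, hv⟩⟩
  refine (norm_eq_iInf_iff_real_inner_le_zero hK hv).1 (le_antisymm ?_ ?_) w hw
  · exact le_ciInf fun w => hmin w.2
  · exact ciInf_le ⟨0, Set.forall_mem_range.2 fun _ => norm_nonneg _⟩ (⟨v, hv⟩ : K)

theorem inner_add_half_mul_norm_sub_sq {ρ : ℝ} (hρ : ρ ≠ 0) (d w y : E) :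
    ⟪d, y⟫ + ρ / 2 * ‖y - w‖ ^ 2 =
      ρ / 2 * ‖(w - ρ⁻¹ • d) - y‖ ^ 2 + (⟪d, w⟫ - ‖d‖ ^ 2 / (2 * ρ)) := by
  rw [sub_right_comm w, norm_sub_sq_real (w - y), norm_sub_rev w y, norm_smul, inner_smul_right,
    mul_pow, Real.norm_eq_abs, sq_abs, inner_sub_left, real_inner_comm d w, real_inner_comm d y]
  field_simp
  ring

theorem IsMinOn.norm_sub_of_inner_add_half_mul_norm_sub_sq {K : Set E} {ρ : ℝ} (hρ : 0 < ρ)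
    {d w x : E} (hmin : IsMinOn (fun y => ⟪d, y⟫ + ρ / 2 * ‖y - w‖ ^ 2) K x) :
    IsMinOn (fun y => ‖(w - ρ⁻¹ • d) - y‖) K x := by
  intro y hy
  have := hmin hy
  simp only [Set.mem_ofPred_eq, inner_add_half_mul_norm_sub_sq hρ.ne'] at this ⊢
  exact (sq_le_sq₀ (norm_nonneg _) (norm_nonneg _)).1 (by nlinarith)

theorem le_and_norm_le_of_forall_add_inner_le {g B c : ℝ} {v : E} (hc : 0 < c)
    (hB : ∀ w : E, ‖w‖ ≤ c → g + ⟪w, v⟫ ≤ B) (hg : -g ≤ c / 2 * ‖v‖) :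
    g ≤ B ∧ ‖v‖ ≤ 2 * B / c := by
  have hgB : g ≤ B := by simpa using hB 0 (by simpa using hc.le)
  refine ⟨hgB, (le_div_iff₀ hc).2 ?_⟩
  rcases eq_or_ne v 0 with rfl | hv
  · simp only [norm_zero, mul_zero] at hg ⊢
    linarith
  have hnv : 0 < ‖v‖ := norm_pos_iff.2 hv
  -- the worst-case multiplier points along `v`
  have hw := hB ((c / ‖v‖) • v) (by
    rw [norm_smul, Real.norm_of_nonneg (by positivity), div_mul_cancel₀ _ hnv.ne'])
  have hinner : ⟪(c / ‖v‖) • v, v⟫ = c * ‖v‖ := by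
    rw [real_inner_smul_left, real_inner_self_eq_norm_sq]
    field_simp
  linarith

end InnerProductSpace

theorem sum_Icc_one_eq_sum_range {M : Type*} [AddCommMonoid M] (g : ℕ → M) (t : ℕ) :
    ∑ ℓ ∈ Icc 1 (t + 1), g ℓ = ∑ ℓ ∈ range (t + 1), g (ℓ + 1) := by
  rw [range_eq_Ico, sum_Ico_add', ← Ico_add_one_right_eq_Icc]

noncomputable def ergodicAvg {E : Type*} [AddCommMonoid E] [Module ℝ E] (x : ℕ → E) (t : ℕ) : E :=
  ((t : ℝ) + 1)⁻¹ • ∑ ℓ ∈ Icc 1 (t + 1), x ℓ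

theorem Convex.ergodicAvg_mem {E : Type*} [AddCommGroup E] [Module ℝ E] {C : Set E}
    (hC : Convex ℝ C) {x : ℕ → E} (hx : ∀ t, x (t + 1) ∈ C) (t : ℕ) : ergodicAvg x t ∈ C := by
  rw [ergodicAvg, sum_Icc_one_eq_sum_range, smul_sum]
  refine hC.sum_mem (fun _ _ => by positivity) ?_ fun ℓ _ => hx ℓ
  rw [sum_const, card_range, nsmul_eq_mul]
  push_cast
  field_simp

section ADMM

variable {E : Type*} [NormedAddCommGroup E] [InnerProductSpace ℝ E]

structure IsADMM (d : E) (C₁ C₂ : Set E) (ρ : ℝ) (x z μ : ℕ → E) : Prop where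
  x_mem (t : ℕ) : x (t + 1) ∈ C₁
  x_isMinOn (t : ℕ) : IsMinOn (fun y => ⟪d, y⟫ + ρ / 2 * ‖y - z t + μ t‖ ^ 2) C₁ (x (t + 1))
  z_mem (t : ℕ) : z (t + 1) ∈ C₂
  z_isMinOn (t : ℕ) : IsMinOn (fun w => ‖x (t + 1) - w + μ t‖) C₂ (z (t + 1))
  dual_update (t : ℕ) : μ (t + 1) = μ t + x (t + 1) - z (t + 1)

theorem energy_identity (z₀ z₁ μ₀ μ₁ p q : E) :
    2 * (⟪z₀ - z₁, z₁ + (μ₁ - μ₀) - p⟫ - ⟪μ₁ - q, μ₁ - μ₀⟫) =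
      (‖z₀ - p‖ ^ 2 + ‖μ₀ - q‖ ^ 2) - (‖z₁ - p‖ ^ 2 + ‖μ₁ - q‖ ^ 2)
        - ‖z₁ - z₀ + (μ₁ - μ₀)‖ ^ 2 := by
  simp only [← real_inner_self_eq_norm_sq, inner_add_left, inner_add_right, inner_sub_left,
    inner_sub_right, real_inner_comm]
  ring

namespace IsADMM

variable {d : E} {C₁ C₂ : Set E} {ρ : ℝ} {x z μ : ℕ → E}

theorem x_optimality (h : IsADMM d C₁ C₂ ρ x z μ) (hC₁ : Convex ℝ C₁) (hρ : 0 < ρ) (t : ℕ) {y : E}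
    (hy : y ∈ C₁) : ρ * ⟪z t - μ t - x (t + 1), y - x (t + 1)⟫ ≤ ⟪d, y - x (t + 1)⟫ := by
  have hmin := h.x_isMinOn t
  simp_rw [sub_add] at hmin
  have := real_inner_sub_le_zero_of_isMinOn hC₁ (h.x_mem t)
    (hmin.norm_sub_of_inner_add_half_mul_norm_sub_sq hρ) hy
  rw [sub_right_comm, inner_sub_left, real_inner_smul_left, sub_nonpos] at this
  calc ρ * ⟪z t - μ t - x (t + 1), y - x (t + 1)⟫
      ≤ ρ * (ρ⁻¹ * ⟪d, y - x (t + 1)⟫) := by gcongr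
    _ = ⟪d, y - x (t + 1)⟫ := mul_inv_cancel_left₀ hρ.ne' _

theorem z_optimality (h : IsADMM d C₁ C₂ ρ x z μ) (hC₂ : Convex ℝ C₂) (t : ℕ) {w : E} (hw : w ∈ C₂) :
    ⟪μ (t + 1), w - z (t + 1)⟫ ≤ 0 := by
  have hmin := h.z_isMinOn t
  simp_rw [sub_add_eq_add_sub] at hmin
  have := real_inner_sub_le_zero_of_isMinOn hC₂ (h.z_mem t) hmin hw
  rwa [add_comm, ← h.dual_update] at this

theorem descent (h : IsADMM d C₁ C₂ ρ x z μ) (hC₁ : Convex ℝ C₁) (hC₂ : Convex ℝ C₂)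
    (hρ : 0 < ρ) {p : E} (hp : p ∈ C₁ ∩ C₂) (q : E) (t : ℕ) :
    ⟪d, x (t + 1) - p⟫ + ρ * ⟪q, x (t + 1) - z (t + 1)⟫ ≤
      ρ / 2 * ((‖z t - p‖ ^ 2 + ‖μ t - q‖ ^ 2) - (‖z (t + 1) - p‖ ^ 2 + ‖μ (t + 1) - q‖ ^ 2)) := by
  have hx := h.x_optimality hC₁ hρ t hp.1
  have hz := mul_nonpos_of_nonneg_of_nonpos hρ.le (h.z_optimality hC₂ t hp.2)
  have hid := energy_identity (z t) (z (t + 1)) (μ t) (μ (t + 1)) p q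
  have hsq := mul_nonneg hρ.le (sq_nonneg ‖z (t + 1) - z t + (μ (t + 1) - μ t)‖)
  rw [show x (t + 1) = z (t + 1) + (μ (t + 1) - μ t) by rw [h.dual_update]; abel] at hx ⊢
  simp only [inner_add_left, inner_add_right, inner_sub_left, inner_sub_right,
    real_inner_comm] at hx hz hid ⊢
  linear_combination hx + hz + ρ / 2 * hid + hsq / 2

theorem ergodicAvg_descent (h : IsADMM d C₁ C₂ ρ x z μ) (hC₁ : Convex ℝ C₁)
    (hC₂ : Convex ℝ C₂) (hρ : 0 < ρ) {p : E} (hp : p ∈ C₁ ∩ C₂) (q : E) (t : ℕ) :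
    ⟪d, ergodicAvg x t - p⟫ + ρ * ⟪q, ergodicAvg x t - ergodicAvg z t⟫ ≤
      ρ / (2 * ((t : ℝ) + 1)) * (‖z 0 - p‖ ^ 2 + ‖μ 0 - q‖ ^ 2) := by
  set V : ℕ → ℝ := fun s => ‖z s - p‖ ^ 2 + ‖μ s - q‖ ^ 2
  have hsum : ∑ ℓ ∈ range (t + 1), (⟪d, x (ℓ + 1) - p⟫ + ρ * ⟪q, x (ℓ + 1) - z (ℓ + 1)⟫) ≤
      ρ / 2 * V 0 :=
    calc _ ≤ ∑ ℓ ∈ range (t + 1), ρ / 2 * (V ℓ - V (ℓ + 1)) :=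
          sum_le_sum fun ℓ _ => h.descent hC₁ hC₂ hρ hp q ℓ
      _ = ρ / 2 * (V 0 - V (t + 1)) := by rw [← mul_sum, sum_range_sub']
      _ ≤ ρ / 2 * V 0 := by
          gcongr
          exact sub_le_self _ (by positivity)
  have havg : ((t : ℝ) + 1) * (⟪d, ergodicAvg x t - p⟫ + ρ * ⟪q, ergodicAvg x t - ergodicAvg z t⟫)
      = ∑ ℓ ∈ range (t + 1), (⟪d, x (ℓ + 1) - p⟫ + ρ * ⟪q, x (ℓ + 1) - z (ℓ + 1)⟫) := by
    simp only [ergodicAvg, sum_Icc_one_eq_sum_range, inner_sub_right, inner_smul_right, inner_sum,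
      sum_add_distrib, sum_sub_distrib, ← mul_sum, sum_const, card_range, nsmul_eq_mul]
    field_simp
    push_cast
    ring
  rw [div_mul_eq_mul_div, le_div_iff₀ (by positivity)]
  linarith

theorem ergodic_rate (h : IsADMM d C₁ C₂ ρ x z μ) (hC₁ : Convex ℝ C₁) (hC₂ : Convex ℝ C₂)
    (hρ : 0 < ρ) {p : E} (hp : p ∈ C₁ ∩ C₂) {ν : E}
    (hν : ∀ y ∈ C₁, ∀ w ∈ C₂, ⟪d, p⟫ ≤ ⟪d, y⟫ + ⟪ν, y - w⟫) {c₁ c₂ : ℝ} (hc₂ : 0 < c₂)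
    (hνc₂ : 2 * ‖ν‖ ≤ c₂) (hc₁ : ‖z 0 - p‖ ^ 2 + (‖μ 0‖ + c₂ / ρ) ^ 2 ≤ c₁) (t : ℕ) :
    ⟪d, ergodicAvg x t⟫ - ⟪d, p⟫ ≤ ρ * c₁ / (2 * ((t : ℝ) + 1)) ∧
      ‖ergodicAvg x t - ergodicAvg z t‖ ≤ ρ * c₁ / (c₂ * ((t : ℝ) + 1)) := by
  have hLagrangian : ∀ w : E, ‖w‖ ≤ c₂ → ⟪d, ergodicAvg x t - p⟫ +
      ⟪w, ergodicAvg x t - ergodicAvg z t⟫ ≤ ρ * c₁ / (2 * ((t : ℝ) + 1)) := by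
    intro w hw
    have hμ : ‖μ 0 - ρ⁻¹ • w‖ ≤ ‖μ 0‖ + c₂ / ρ := by
      grw [norm_sub_le, norm_smul, norm_inv, Real.norm_of_nonneg hρ.le, hw, inv_mul_eq_div]
    have := h.ergodicAvg_descent hC₁ hC₂ hρ hp (ρ⁻¹ • w) t
    rw [real_inner_smul_left, mul_inv_cancel_left₀ hρ.ne'] at this
    refine this.trans ?_
    rw [div_mul_eq_mul_div]
    gcongr
    grw [hμ]
    exact hc₁
  have hdual : -⟪d, ergodicAvg x t - p⟫ ≤ c₂ / 2 * ‖ergodicAvg x t - ergodicAvg z t‖ := by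
    have := hν _ (hC₁.ergodicAvg_mem h.x_mem t) _ (hC₂.ergodicAvg_mem h.z_mem t)
    have := real_inner_le_norm ν (ergodicAvg x t - ergodicAvg z t)
    rw [inner_sub_right]
    nlinarith [norm_nonneg (ergodicAvg x t - ergodicAvg z t)]
  obtain ⟨hgap, hfeas⟩ := le_and_norm_le_of_forall_add_inner_le hc₂ hLagrangian hdual
  refine ⟨by rwa [inner_sub_right] at hgap, hfeas.trans_eq ?_⟩
  field_simp

end IsADMM

end ADMM

section Matrix

def matrixEuclideanEquiv (ι κ : Type*) : Matrix ι κ ℝ ≃ₗ[ℝ] EuclideanSpace ℝ (ι × κ) :=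
  (LinearEquiv.curry ℝ ℝ ι κ).symm ≪≫ₗ (WithLp.linearEquiv 2 ℝ (ι × κ → ℝ)).symm

@[simp] theorem matrixEuclideanEquiv_apply {ι κ : Type*} (A : Matrix ι κ ℝ) (pq : ι × κ) :
    matrixEuclideanEquiv ι κ A pq = A pq.1 pq.2 := rfl

theorem norm_matrixEuclideanEquiv {m n : ℕ} (A : Matrix (Fin m) (Fin n) ℝ) :
    ‖matrixEuclideanEquiv _ _ A‖ = frob A := by
  simp [EuclideanSpace.norm_eq, frob, Fintype.sum_prod_type]

theorem inner_matrixEuclideanEquiv {ι κ : Type*} [Fintype ι] [Fintype κ] (A B : Matrix ι κ ℝ) :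
    ⟪matrixEuclideanEquiv _ _ A, matrixEuclideanEquiv _ _ B⟫ = trace (Aᵀ * B) := by
  simp [PiLp.inner_apply, Fintype.sum_prod_type, trace, mul_apply, mul_comm]
  exact sum_comm

theorem convex_setOf_sum_row_eq_and_sum_col_eq {ι κ : Type*} [Fintype ι] [Fintype κ]
    (a : ι → ℝ) (b : κ → ℝ) :
    Convex ℝ {X : Matrix ι κ ℝ | (∀ p, ∑ q, X p q = a p) ∧ (∀ q, ∑ p, X p q = b q)} := by
  rintro X ⟨hXa, hXb⟩ Y ⟨hYa, hYb⟩ s r - - hsr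
  refine ⟨fun p => ?_, fun q => ?_⟩ <;>
  · simp only [Matrix.add_apply, Matrix.smul_apply, smul_eq_mul, sum_add_distrib, ← mul_sum,
      hXa, hYa, hXb, hYb]
    rw [← add_mul, hsr, one_mul]

end Matrix

theorem ADMM_convergence_order_constrained_OT_general
    (m n : ℕ)
    (D : Matrix (Fin m) (Fin n) ℝ)
    (a : Fin m → ℝ) (b : Fin n → ℝ)
    (C₁ : Set (Matrix (Fin m) (Fin n) ℝ))
    (hC₁ : C₁ = {X | (∀ p, ∑ q, X p q = a p) ∧ (∀ q, ∑ p, X p q = b q)})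
    (C₂ : Set (Matrix (Fin m) (Fin n) ℝ))
    (hC₂convex : Convex ℝ C₂)
    (f : Matrix (Fin m) (Fin n) ℝ → ℝ)
    (hf : ∀ X, f X = Matrix.trace (Dᵀ * X))
    (ρ : ℝ) (hρ : 0 < ρ)
    (X Z M : ℕ → Matrix (Fin m) (Fin n) ℝ)
    (hX : ∀ t : ℕ, X (t + 1) ∈ C₁ ∧
      ∀ X' ∈ C₁, f (X (t + 1)) + ρ / 2 * frob (X (t + 1) - Z t + M t) ^ 2 ≤
        f X' + ρ / 2 * frob (X' - Z t + M t) ^ 2)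
    (hZ : ∀ t : ℕ, Z (t + 1) ∈ C₂ ∧
      ∀ Z' ∈ C₂, frob (X (t + 1) - Z (t + 1) + M t) ≤ frob (X (t + 1) - Z' + M t))
    (hM : ∀ t : ℕ, M (t + 1) = M t + X (t + 1) - Z (t + 1))
    (Pstar : Matrix (Fin m) (Fin n) ℝ)
    (hPstar : Pstar ∈ C₁ ∩ C₂)
    (fstar : ℝ) (hfstar : fstar = f Pstar)
    (Ystar : Matrix (Fin m) (Fin n) ℝ)
    (hYstar : ∀ X' ∈ C₁, ∀ Z' ∈ C₂,
      fstar ≤ f X' + Matrix.trace (Ystarᵀ * (X' - Z')))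
    (c₁ c₂ : ℝ) (hc₂pos : 0 < c₂)
    (hc₂ : 2 * frob Ystar ≤ c₂)
    (hc₁ : frob (Z 0 - Pstar) ^ 2 + (frob (M 0) + c₂ / ρ) ^ 2 ≤ c₁)
    (Xbar Zbar : ℕ → Matrix (Fin m) (Fin n) ℝ)
    (hXbar : ∀ t : ℕ, Xbar t = (((t : ℝ) + 1)⁻¹) • ∑ ℓ ∈ Finset.Icc 1 (t + 1), X ℓ)
    (hZbar : ∀ t : ℕ, Zbar t = (((t : ℝ) + 1)⁻¹) • ∑ ℓ ∈ Finset.Icc 1 (t + 1), Z ℓ) :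
    ∀ t : ℕ,
      f (Xbar t) - fstar ≤ ρ * c₁ / (2 * ((t : ℝ) + 1)) ∧
      frob (Xbar t - Zbar t) ≤ ρ * c₁ / (c₂ * ((t : ℝ) + 1)) := by
  subst hfstar
  set φ := matrixEuclideanEquiv (Fin m) (Fin n)
  have hf' (A : Matrix (Fin m) (Fin n) ℝ) : f A = ⟪φ D, φ A⟫ := by
    rw [hf, inner_matrixEuclideanEquiv]
  have hfrob (A : Matrix (Fin m) (Fin n) ℝ) : frob A = ‖φ A‖ := (norm_matrixEuclideanEquiv A).symm
  have hADMM : IsADMM (φ D) (φ '' C₁) (φ '' C₂) ρ (φ ∘ X) (φ ∘ Z) (φ ∘ M) :=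
    { x_mem := fun t => Set.mem_image_of_mem φ (hX t).1
      x_isMinOn := by
        rintro t _ ⟨Y, hY, rfl⟩
        simpa [hf', hfrob] using (hX t).2 Y hY
      z_mem := fun t => Set.mem_image_of_mem φ (hZ t).1
      z_isMinOn := by
        rintro t _ ⟨W, hW, rfl⟩
        simpa [hfrob] using (hZ t).2 W hW
      dual_update := fun t => by simp [hM t] }
  have hdual : ∀ y ∈ φ '' C₁, ∀ w ∈ φ '' C₂, ⟪φ D, φ Pstar⟫ ≤ ⟪φ D, y⟫ + ⟪φ Ystar, y - w⟫ := by
    rintro _ ⟨Y, hY, rfl⟩ _ ⟨W, hW, rfl⟩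
    rw [← map_sub, ← hf', ← hf', inner_matrixEuclideanEquiv]
    exact hYstar Y hY W hW
  have hbar (t : ℕ) : φ (Xbar t) = ergodicAvg (φ ∘ X) t ∧ φ (Zbar t) = ergodicAvg (φ ∘ Z) t := by
    simp [hXbar, hZbar, ergodicAvg, map_sum]
  have hc₁' : ‖φ (Z 0) - φ Pstar‖ ^ 2 + (‖φ (M 0)‖ + c₂ / ρ) ^ 2 ≤ c₁ := by
    rwa [← map_sub, ← hfrob, ← hfrob]
  intro t
  obtain ⟨hgap, hfeas⟩ := hADMM.ergodic_rate
    ((hC₁ ▸ convex_setOf_sum_row_eq_and_sum_col_eq a b).linear_image φ.toLinearMap)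
    (hC₂convex.linear_image φ.toLinearMap) hρ ⟨Set.mem_image_of_mem φ hPstar.1,
      Set.mem_image_of_mem φ hPstar.2⟩ hdual hc₂pos (by rwa [← hfrob]) hc₁' t
  rw [hf', hf', hfrob, map_sub, (hbar t).1, (hbar t).2]
  exact ⟨hgap, hfeas⟩

/-- **Non-asymptotic convergence of ADMM for order-constrained OT (Theorem 1).**
With `f X = tr(Dᵀ X)`, marginal constraint set `C₁`, nonempty closed convex `C₂`
intersecting `C₁`, ADMM iterates `X, Z, M` with penalty `ρ > 0`, optimal `Π*` of
value `f*`, dual certificate `Y*` with `f* ≤ f X + ⟨Y*, X - Z⟩` on `C₁ × C₂`, and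
constants `c₂ ≥ 2‖Y*‖_F`, `c₁ ≥ ‖Z₀ - Π*‖² + (‖M₀‖ + c₂/ρ)²`, the running averages
satisfy `f(X̄_t) - f* ≤ ρ c₁ / (2(t+1))` and `‖X̄_t - Z̄_t‖_F ≤ ρ c₁ / (c₂ (t+1))`. -/
theorem ADMM_convergence_order_constrained_OT
    (m n : ℕ) (hm : 1 ≤ m) (hn : 1 ≤ n)
    (D : Matrix (Fin m) (Fin n) ℝ)
    (a : Fin m → ℝ) (b : Fin n → ℝ)
    (ha0 : ∀ i, 0 ≤ a i) (hb0 : ∀ j, 0 ≤ b j)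
    (ha1 : ∑ i, a i = 1) (hb1 : ∑ j, b j = 1)
    (C₁ : Set (Matrix (Fin m) (Fin n) ℝ))
    (hC₁ : C₁ = {X | (∀ p, ∑ q, X p q = a p) ∧ (∀ q, ∑ p, X p q = b q)})
    (C₂ : Set (Matrix (Fin m) (Fin n) ℝ))
    (hC₂ne : C₂.Nonempty) (hC₂closed : IsClosed C₂) (hC₂convex : Convex ℝ C₂)
    (hC₁C₂ : (C₁ ∩ C₂).Nonempty)
    (f : Matrix (Fin m) (Fin n) ℝ → ℝ)
    (hf : ∀ X, f X = Matrix.trace (Dᵀ * X))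
    (ρ : ℝ) (hρ : 0 < ρ)
    (X Z M : ℕ → Matrix (Fin m) (Fin n) ℝ)
    (hX : ∀ t : ℕ, X (t + 1) ∈ C₁ ∧
      ∀ X' ∈ C₁, f (X (t + 1)) + ρ / 2 * frob (X (t + 1) - Z t + M t) ^ 2 ≤
        f X' + ρ / 2 * frob (X' - Z t + M t) ^ 2)
    (hZ : ∀ t : ℕ, Z (t + 1) ∈ C₂ ∧
      ∀ Z' ∈ C₂, frob (X (t + 1) - Z (t + 1) + M t) ≤ frob (X (t + 1) - Z' + M t))
    (hM : ∀ t : ℕ, M (t + 1) = M t + X (t + 1) - Z (t + 1))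
    (Pstar : Matrix (Fin m) (Fin n) ℝ)
    (hPstar : Pstar ∈ C₁ ∩ C₂)
    (hPopt : ∀ X' ∈ C₁ ∩ C₂, f Pstar ≤ f X')
    (fstar : ℝ) (hfstar : fstar = f Pstar)
    (Ystar : Matrix (Fin m) (Fin n) ℝ)
    (hYstar : ∀ X' ∈ C₁, ∀ Z' ∈ C₂,
      fstar ≤ f X' + Matrix.trace (Ystarᵀ * (X' - Z')))
    (c₁ c₂ : ℝ) (hc₂pos : 0 < c₂)
    (hc₂ : 2 * frob Ystar ≤ c₂)
    (hc₁ : frob (Z 0 - Pstar) ^ 2 + (frob (M 0) + c₂ / ρ) ^ 2 ≤ c₁)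
    (Xbar Zbar : ℕ → Matrix (Fin m) (Fin n) ℝ)
    (hXbar : ∀ t : ℕ, Xbar t = (((t : ℝ) + 1)⁻¹) • ∑ ℓ ∈ Finset.Icc 1 (t + 1), X ℓ)
    (hZbar : ∀ t : ℕ, Zbar t = (((t : ℝ) + 1)⁻¹) • ∑ ℓ ∈ Finset.Icc 1 (t + 1), Z ℓ) :
    ∀ t : ℕ,
      f (Xbar t) - fstar ≤ ρ * c₁ / (2 * ((t : ℝ) + 1)) ∧
      frob (Xbar t - Zbar t) ≤ ρ * c₁ / (c₂ * ((t : ℝ) + 1)) :=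
  ADMM_convergence_order_constrained_OT_general m n D a b C₁ hC₁ C₂ hC₂convex f hf ρ hρ X Z M hX hZ
    hM Pstar hPstar fstar hfstar Ystar hYstar c₁ c₂ hc₂pos hc₂ hc₁ Xbar Zbar hXbar hZbar
end
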